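/- arXiv:1408.3051 — 6 statements merged into one kernel-verified Lean document; each statement's English description precedes it below -/
import Mathlib

section
/- Let $K$ and $M$ be nonnegative integers and let $\zeta_1$ be a smooth function on $\mathbb{R}$ supported in $(-2,-1/2)\cup(1/2,2)$. There is a constant $C=C(M,K,\zeta_1)$ such that for every $\Lambda\ge 1$, every integer $\ell\ge 0$ and every function $g\in C^K(\mathbb{R})$ all of whose derivatives up to order $K$ are bounded, one has $\big|\int_{\mathbb{R}} y^{2M} g(y)\,\zeta_1(\Lambda^{1/2}2^{-\ell}y)\,e^{i\Lambda y^2}\,dy\big| \le C\, 2^{-2\ell K}\,(2^{\ell}\Lambda^{-1/2})^{1+2M}\,\sum_{j=0}^{K} (2^{\ell}\Lambda^{-1/2})^{j}\,\sup_{\mathbb{R}}|g^{(j)}|$. -/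
open MeasureTheory Real

lemma norm_exp_phase (l t : ℝ) : ‖Complex.exp (Complex.I * l * (t:ℂ) ^ 2)‖ = 1 := by
  rw [Complex.norm_exp]
  have h : (Complex.I * l * (t:ℂ) ^ 2) = Complex.I * ((l * t ^ 2 : ℝ) : ℂ) := by
    push_cast; ring
  rw [h]
  simp only [Complex.mul_re, Complex.I_re, Complex.ofReal_re, Complex.I_im, Complex.ofReal_im]
  norm_num

lemma hasDerivAt_phase (l : ℝ) (t : ℝ) :
    HasDerivAt (fun s : ℝ => Complex.exp (Complex.I * l * (s:ℂ) ^ 2))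
      (Complex.I * l * (2 * t) * Complex.exp (Complex.I * l * (t:ℂ) ^ 2)) t := by
  have h1 : HasDerivAt (fun s : ℝ => (s:ℂ)) 1 t := by
    simpa using (hasDerivAt_id t).ofReal_comp
  have h2 : HasDerivAt (fun s : ℝ => (s:ℂ) ^ 2) (2 * (t:ℂ)) t := by
    have := h1.mul h1
    have h' : HasDerivAt (fun s : ℝ => (s:ℂ) * (s:ℂ)) (1 * (t:ℂ) + (t:ℂ) * 1) t := this
    have h'' : HasDerivAt (fun s : ℝ => (s:ℂ) ^ 2) (1 * (t:ℂ) + (t:ℂ) * 1) t := by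
      convert h' using 2 with s
      · ring
    convert h'' using 1; ring
  have h3 : HasDerivAt (fun s : ℝ => Complex.I * l * (s:ℂ) ^ 2)
      (Complex.I * l * (2 * (t:ℂ))) t := h2.const_mul _
  have := h3.cexp
  convert this using 1
  ring

lemma contDiff_coe : ContDiff ℝ (⊤:ℕ∞) (fun t : ℝ => (t:ℂ)) := Complex.ofRealCLM.contDiff

lemma contDiff_phase (l : ℝ) : ContDiff ℝ (⊤:ℕ∞) (fun s : ℝ => Complex.exp (Complex.I * l * (s:ℂ) ^ 2)) := by
  apply Complex.contDiff_exp.comp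
  have h : ContDiff ℝ (⊤:ℕ∞) (fun s : ℝ => (s:ℂ)) := contDiff_coe
  exact contDiff_const.mul (h.pow 2)

lemma continuous_phase (l : ℝ) : Continuous (fun s : ℝ => Complex.exp (Complex.I * l * (s:ℂ) ^ 2)) :=
  (contDiff_phase l).continuous

lemma osc_core (K : ℕ) : ∀ h : ℝ → ℂ, ContDiff ℝ (⊤:ℕ∞) h → HasCompactSupport h →
    (∀ t : ℝ, |t| < 1/2 → h t = 0) →
    ∃ C : ℝ, 0 ≤ C ∧ ∀ l : ℝ, 1 ≤ l → ∀ G : ℝ → ℂ, ContDiff ℝ K G →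
      (∀ j ≤ K, BddAbove (Set.range fun t => ‖iteratedDeriv j G t‖)) →
      ‖∫ t : ℝ, h t * G t * Complex.exp (Complex.I * l * (t:ℂ) ^ 2)‖ ≤
        C * l ^ (-(K:ℝ)) * ∑ j ∈ Finset.range (K+1), ⨆ t : ℝ, ‖iteratedDeriv j G t‖ := by
  induction K with
  | zero =>
    intro h hsm hc hvan
    refine ⟨∫ t : ℝ, ‖h t‖, integral_nonneg fun t => norm_nonneg _, ?_⟩
    intro l hl G hG hGb
    have hGcont : Continuous G := hG.continuous
    have hS0 : ∀ t : ℝ, ‖G t‖ ≤ ⨆ s : ℝ, ‖iteratedDeriv 0 G s‖ := by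
      intro t
      have := le_ciSup (hGb 0 le_rfl) t
      simpa [iteratedDeriv_zero] using this
    have hFc : Continuous (fun t : ℝ => h t * G t * Complex.exp (Complex.I * l * (t:ℂ) ^ 2)) :=
      (hsm.continuous.mul hGcont).mul (continuous_phase l)
    have hFsupp : HasCompactSupport (fun t : ℝ => h t * G t * Complex.exp (Complex.I * l * (t:ℂ) ^ 2)) :=
      (hc.mul_right).mul_right
    have hFint : Integrable (fun t : ℝ => h t * G t * Complex.exp (Complex.I * l * (t:ℂ) ^ 2)) volume :=
      hFc.integrable_of_hasCompactSupport hFsupp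
    have hhint : Integrable (fun t : ℝ => ‖h t‖) :=
      (hsm.continuous.norm).integrable_of_hasCompactSupport hc.norm
    calc ‖∫ t : ℝ, h t * G t * Complex.exp (Complex.I * l * (t:ℂ) ^ 2)‖
        ≤ ∫ t : ℝ, ‖h t * G t * Complex.exp (Complex.I * l * (t:ℂ) ^ 2)‖ :=
          norm_integral_le_integral_norm _
      _ ≤ ∫ t : ℝ, ‖h t‖ * ⨆ s : ℝ, ‖iteratedDeriv 0 G s‖ := by
          apply integral_mono hFint.norm (hhint.mul_const _)
          intro t
          simp only [norm_mul, norm_exp_phase, mul_one]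
          exact mul_le_mul_of_nonneg_left (hS0 t) (norm_nonneg _)
      _ = (∫ t : ℝ, ‖h t‖) * ⨆ s : ℝ, ‖iteratedDeriv 0 G s‖ := integral_mul_const _ _
      _ ≤ (∫ t : ℝ, ‖h t‖) * l ^ (-(0:ℕ):ℝ) * ∑ j ∈ Finset.range 1, ⨆ t : ℝ, ‖iteratedDeriv j G t‖ := by
          simp
  | succ K ih =>
    intro h hsm hc hvan
    set h₂ : ℝ → ℂ := fun t => h t / (t:ℂ) with hh₂
    have hvan₂ : ∀ t : ℝ, |t| < 1/2 → h₂ t = 0 := fun t ht => by simp [hh₂, hvan t ht]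
    have hnear : ∀ x : ℝ, |x| < 1/2 → h₂ =ᶠ[nhds x] 0 := by
      intro x hx
      have hop : ∀ᶠ t in nhds x, |t| < 1/2 :=
        (isOpen_lt continuous_abs continuous_const).mem_nhds hx
      filter_upwards [hop] with t ht using hvan₂ t ht
    have hsm₂ : ContDiff ℝ (⊤:ℕ∞) h₂ := by
      rw [contDiff_iff_contDiffAt]
      intro x
      rcases lt_or_ge |x| (1/2) with hx | hx
      · exact contDiffAt_const.congr_of_eventuallyEq (hnear x hx)
      · have hx0 : (x:ℂ) ≠ 0 := by
          simp only [ne_eq, Complex.ofReal_eq_zero]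
          intro h0; rw [h0] at hx; norm_num at hx
        have hx0' : (fun t : ℝ => (t:ℂ)) x ≠ 0 := hx0
        have := (hsm.contDiffAt (x := x)).mul ((contDiff_coe.contDiffAt).inv hx0')
        exact this.congr_of_eventuallyEq (Filter.Eventually.of_forall fun t => by simp only [hh₂, div_eq_mul_inv]; rfl)
    have hc₂ : HasCompactSupport h₂ := by
      apply IsCompact.of_isClosed_subset hc isClosed_closure
      apply closure_mono
      intro t ht
      simp only [Function.mem_support] at *
      intro h0
      exact ht (show h t / (t:ℂ) = 0 by simp [h0])
    have hmulkey : ∀ t : ℝ, h₂ t * (t:ℂ) = h t := by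
      intro t
      by_cases h0 : t = 0
      · subst h0
        simp [hh₂, hvan 0 (by norm_num)]
      · have : (t:ℂ) ≠ 0 := by simpa using h0
        exact div_mul_cancel₀ (h t) this
    set h₁ : ℝ → ℂ := deriv h₂ with hh₁
    have hsm₁ : ContDiff ℝ (⊤:ℕ∞) h₁ := (contDiff_infty_iff_deriv.mp hsm₂).2
    have hc₁ : HasCompactSupport h₁ := hc₂.deriv
    have hvan₁ : ∀ t : ℝ, |t| < 1/2 → h₁ t = 0 := by
      intro t ht
      rw [hh₁, (hnear t ht).deriv_eq]
      exact deriv_const t 0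
    obtain ⟨C₁, hC₁0, hC₁⟩ := ih h₁ hsm₁ hc₁ hvan₁
    obtain ⟨C₂, hC₂0, hC₂⟩ := ih h₂ hsm₂ hc₂ hvan₂
    refine ⟨C₁ + C₂, by positivity, ?_⟩
    intro l hl G hG hGb
    have hl0 : (0:ℝ) < l := lt_of_lt_of_le one_pos hl
    have hG' : ContDiff ℝ ((K:WithTop ℕ∞) + 1) G := by exact_mod_cast hG
    have hGd : Differentiable ℝ G ∧ ContDiff ℝ K (deriv G) := by
      have := (contDiff_succ_iff_deriv).mp hG'
      exact ⟨this.1, this.2.2⟩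
    set E : ℝ → ℂ := fun t => Complex.exp (Complex.I * l * (t:ℂ) ^ 2) with hE
    -- derivative computation
    have key : ∀ t : ℝ, HasDerivAt (fun s => h₂ s * G s * E s)
        (h₁ t * G t * E t + h₂ t * deriv G t * E t
          + h₂ t * G t * (Complex.I * l * (2 * t) * E t)) t := by
      intro t
      have a1 : HasDerivAt h₂ (h₁ t) t :=
        ((hsm₂.differentiable (by simp)) t).hasDerivAt
      have a2 : HasDerivAt G (deriv G t) t := (hGd.1 t).hasDerivAt
      have := (a1.mul a2).mul (hasDerivAt_phase l t)
      refine HasDerivAt.congr_deriv this ?_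
      simp only [Pi.mul_apply, hE]
      ring
    have hEc : Continuous E := continuous_phase l
    have hΦsm : ContDiff ℝ 1 (fun t => h₂ t * G t * E t) := by
      have h1 : (1:WithTop ℕ∞) ≤ ((K+1 : ℕ) : WithTop ℕ∞) := by
        exact_mod_cast Nat.succ_le_succ (Nat.zero_le K)
      exact ((hsm₂.of_le (by exact_mod_cast le_top)).mul (hG.of_le h1)).mul
        ((contDiff_phase l).of_le (by exact_mod_cast le_top))
    have hΦc : HasCompactSupport (fun t => h₂ t * G t * E t) := (hc₂.mul_right).mul_right
    have izero : (∫ t : ℝ, (h₁ t * G t * E t + h₂ t * deriv G t * E t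
          + h₂ t * G t * (Complex.I * l * (2 * t) * E t))) = 0 := by
      have hfe : (fun t : ℝ => h₁ t * G t * E t + h₂ t * deriv G t * E t
          + h₂ t * G t * (Complex.I * l * (2 * t) * E t)) = deriv (fun t => h₂ t * G t * E t) :=
        funext fun t => ((key t).deriv).symm
      rw [hfe]
      have hd1 : Continuous (deriv (fun t => h₂ t * G t * E t)) := hΦsm.continuous_deriv le_rfl
      have hint : Integrable (deriv (fun t => h₂ t * G t * E t)) volume :=
        hd1.integrable_of_hasCompactSupport hΦc.deriv
      rw [← intervalIntegral.integral_Iic_add_Ioi (b := 0) hint.integrableOn hint.integrableOn,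
        HasCompactSupport.integral_Iic_deriv_eq hΦsm hΦc 0,
        HasCompactSupport.integral_Ioi_deriv_eq hΦsm hΦc 0]
      ring
    -- integrability of the three pieces
    have hint₁ : Integrable (fun t : ℝ => h₁ t * G t * E t) :=
      (((hsm₁.continuous).mul hG.continuous).mul hEc).integrable_of_hasCompactSupport
        (hc₁.mul_right).mul_right
    have hint₂ : Integrable (fun t : ℝ => h₂ t * deriv G t * E t) :=
      (((hsm₂.continuous).mul hGd.2.continuous).mul hEc).integrable_of_hasCompactSupport
        (hc₂.mul_right).mul_right
    have hint₃ : Integrable (fun t : ℝ => h₂ t * G t * (Complex.I * l * (2 * t) * E t)) := by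
      apply Continuous.integrable_of_hasCompactSupport
      · apply ((hsm₂.continuous).mul hG.continuous).mul
        exact ((continuous_const.mul (continuous_const.mul Complex.continuous_ofReal))).mul hEc
      · exact (hc₂.mul_right).mul_right
    have hsplit : (∫ t : ℝ, h₁ t * G t * E t) + (∫ t : ℝ, h₂ t * deriv G t * E t)
        + (∫ t : ℝ, h₂ t * G t * (Complex.I * l * (2 * t) * E t)) = 0 := by
      have e2 : (∫ t : ℝ, (h₁ t * G t * E t + h₂ t * deriv G t * E t))
          = (∫ t : ℝ, h₁ t * G t * E t) + ∫ t : ℝ, h₂ t * deriv G t * E t :=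
        integral_add hint₁ hint₂
      have e1 : (∫ t : ℝ, (h₁ t * G t * E t + h₂ t * deriv G t * E t
            + h₂ t * G t * (Complex.I * l * (2 * t) * E t)))
          = (∫ t : ℝ, (h₁ t * G t * E t + h₂ t * deriv G t * E t))
            + ∫ t : ℝ, h₂ t * G t * (Complex.I * l * (2 * t) * E t) :=
        integral_add (hint₁.add hint₂) hint₃
      rw [← e2, ← e1]
      exact izero
    have hthird : (∫ t : ℝ, h₂ t * G t * (Complex.I * l * (2 * t) * E t))
        = (2 * Complex.I * l) * ∫ t : ℝ, h t * G t * E t := by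
      rw [← integral_const_mul]
      congr 1
      funext t
      rw [← hmulkey t]
      push_cast
      ring
    have hmain : (2 * Complex.I * l) * (∫ t : ℝ, h t * G t * E t)
        = -((∫ t : ℝ, h₁ t * G t * E t) + (∫ t : ℝ, h₂ t * deriv G t * E t)) := by
      rw [← hthird]; linear_combination hsplit
    have hnorm2l : ‖(2 * Complex.I * l : ℂ)‖ = 2 * l := by
      simp [norm_mul, abs_of_pos hl0]
    have hnormmain : (2 * l) * ‖∫ t : ℝ, h t * G t * E t‖
        ≤ ‖∫ t : ℝ, h₁ t * G t * E t‖ + ‖∫ t : ℝ, h₂ t * deriv G t * E t‖ := by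
      rw [← hnorm2l, ← norm_mul, hmain, norm_neg]
      exact norm_add_le _ _
    -- apply induction hypotheses
    have hGb' : ∀ j ≤ K, BddAbove (Set.range fun t => ‖iteratedDeriv j G t‖) :=
      fun j hj => hGb j (le_trans hj (Nat.le_succ K))
    have hb₁ := hC₁ l hl G (hG.of_succ) hGb'
    have hGb'' : ∀ j ≤ K, BddAbove (Set.range fun t => ‖iteratedDeriv j (deriv G) t‖) := by
      intro j hj
      have := hGb (j+1) (Nat.succ_le_succ hj)
      simpa [iteratedDeriv_succ'] using this
    have hb₂ := hC₂ l hl (deriv G) hGd.2 hGb''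
    have hSnonneg : ∀ j : ℕ, 0 ≤ ⨆ t : ℝ, ‖iteratedDeriv j G t‖ :=
      fun j => Real.iSup_nonneg fun t => norm_nonneg _
    set Sf : ℝ := ∑ j ∈ Finset.range (K+2), ⨆ t : ℝ, ‖iteratedDeriv j G t‖ with hSf
    have hSfnonneg : 0 ≤ Sf := Finset.sum_nonneg fun j _ => hSnonneg j
    have hsum1 : (∑ j ∈ Finset.range (K+1), ⨆ t : ℝ, ‖iteratedDeriv j G t‖) ≤ Sf := by
      exact Finset.sum_le_sum_of_subset_of_nonneg
        (Finset.range_subset_range.mpr (by omega)) (fun j _ _ => hSnonneg j)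
    have hsum2 : (∑ j ∈ Finset.range (K+1), ⨆ t : ℝ, ‖iteratedDeriv j (deriv G) t‖) ≤ Sf := by
      have heq : (∑ j ∈ Finset.range (K+1), ⨆ t : ℝ, ‖iteratedDeriv j (deriv G) t‖)
          = ∑ j ∈ Finset.range (K+1), ⨆ t : ℝ, ‖iteratedDeriv (j+1) G t‖ := by
        apply Finset.sum_congr rfl
        intro j _
        simp [iteratedDeriv_succ']
      rw [heq, hSf]
      conv_rhs => rw [Finset.sum_range_succ']
      exact le_add_of_nonneg_right (hSnonneg 0)
    have hlK : (0:ℝ) < l ^ (-(K:ℝ)) := Real.rpow_pos_of_pos hl0 _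
    have hstep : ‖∫ t : ℝ, h t * G t * E t‖ ≤ (C₁ + C₂) * (l ^ (-(K:ℝ)) * l⁻¹) * Sf := by
      have h2l : (0:ℝ) < 2 * l := by linarith
      rw [← le_div_iff₀' h2l] at hnormmain
      refine le_trans hnormmain ?_
      have hnum : ‖∫ t : ℝ, h₁ t * G t * E t‖ + ‖∫ t : ℝ, h₂ t * deriv G t * E t‖
          ≤ (C₁ + C₂) * l ^ (-(K:ℝ)) * Sf := by
        calc ‖∫ t : ℝ, h₁ t * G t * E t‖ + ‖∫ t : ℝ, h₂ t * deriv G t * E t‖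
            ≤ C₁ * l ^ (-(K:ℝ)) * (∑ j ∈ Finset.range (K+1), ⨆ t : ℝ, ‖iteratedDeriv j G t‖)
              + C₂ * l ^ (-(K:ℝ)) * (∑ j ∈ Finset.range (K+1), ⨆ t : ℝ, ‖iteratedDeriv j (deriv G) t‖) :=
              add_le_add hb₁ hb₂
          _ ≤ C₁ * l ^ (-(K:ℝ)) * Sf + C₂ * l ^ (-(K:ℝ)) * Sf := by
              gcongr
          _ = (C₁ + C₂) * l ^ (-(K:ℝ)) * Sf := by ring
      calc (‖∫ t : ℝ, h₁ t * G t * E t‖ + ‖∫ t : ℝ, h₂ t * deriv G t * E t‖) / (2 * l)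
          ≤ ((C₁ + C₂) * l ^ (-(K:ℝ)) * Sf) / (2 * l) := by
            gcongr
        _ ≤ (C₁ + C₂) * (l ^ (-(K:ℝ)) * l⁻¹) * Sf := by
            rw [div_eq_mul_inv]
            have : ((2:ℝ) * l)⁻¹ ≤ l⁻¹ := by
              apply inv_anti₀ hl0 (by linarith)
            calc (C₁ + C₂) * l ^ (-(K:ℝ)) * Sf * (2*l)⁻¹
                ≤ (C₁ + C₂) * l ^ (-(K:ℝ)) * Sf * l⁻¹ := by
                  apply mul_le_mul_of_nonneg_left this
                  positivity
              _ = (C₁ + C₂) * (l ^ (-(K:ℝ)) * l⁻¹) * Sf := by ring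
    have hrw : l ^ (-(K:ℝ)) * l⁻¹ = l ^ (-((K+1:ℕ):ℝ)) := by
      rw [← Real.rpow_neg_one l, ← Real.rpow_add hl0]
      push_cast
      ring_nf
    rw [hrw] at hstep
    exact hstep

/-- A stationary-phase type estimate for oscillatory integrals with a
dyadic cutoff `ζ₁` supported in `(-2,-1/2) ∪ (1/2,2)`. -/
theorem oscillatory_integral_dyadic_bound (K M : ℕ) (ζ₁ : ℝ → ℝ)
    (hζsmooth : ContDiff ℝ (⊤ : ℕ∞) ζ₁)
    (hζsupp : Function.support ζ₁ ⊆ Set.Ioo (-2 : ℝ) (-(1/2)) ∪ Set.Ioo (1/2 : ℝ) 2) :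
    ∃ C : ℝ, ∀ (Λ : ℝ), 1 ≤ Λ → ∀ (ℓ : ℕ) (g : ℝ → ℂ),
      ContDiff ℝ K g →
      (∀ j ≤ K, BddAbove (Set.range fun y => ‖iteratedDeriv j g y‖)) →
      ‖∫ y : ℝ, (y : ℂ) ^ (2 * M) * g y * (ζ₁ (Λ ^ ((1:ℝ)/2) * 2 ^ (-(ℓ : ℝ)) * y) : ℂ) *
          Complex.exp (Complex.I * (Λ : ℂ) * (y : ℂ) ^ 2)‖
        ≤ C * 2 ^ (-(2 * ℓ * K : ℝ)) * ((2 : ℝ) ^ (ℓ : ℝ) * Λ ^ (-(1/2) : ℝ)) ^ (1 + 2 * M) *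
            ∑ j ∈ Finset.range (K + 1),
              ((2 : ℝ) ^ (ℓ : ℝ) * Λ ^ (-(1/2) : ℝ)) ^ j * (⨆ y : ℝ, ‖iteratedDeriv j g y‖) := by
  classical
  -- vanishing of ζ₁ near 0 and outside [-2,2]
  have hζvan : ∀ t : ℝ, |t| < 1/2 → ζ₁ t = 0 := by
    intro t ht
    by_contra h0
    rw [abs_lt] at ht
    rcases hζsupp (Function.mem_support.mpr h0) with h1 | h1 <;>
      simp only [Set.mem_Ioo] at h1 <;> linarith [h1.1, h1.2, ht.1, ht.2]
  have hζout : ∀ t : ℝ, t ∉ Set.Icc (-2:ℝ) 2 → ζ₁ t = 0 := by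
    intro t ht
    by_contra h0
    rcases hζsupp (Function.mem_support.mpr h0) with h1 | h1 <;>
      simp only [Set.mem_Ioo] at h1 <;> exact ht ⟨by linarith [h1.1], by linarith [h1.2]⟩
  -- the fixed cutoff h
  set h : ℝ → ℂ := fun t => (t:ℂ) ^ (2*M) * (ζ₁ t : ℂ) with hh
  have hζC : ContDiff ℝ (⊤:ℕ∞) (fun t : ℝ => ((ζ₁ t : ℝ) : ℂ)) :=
    Complex.ofRealCLM.contDiff.comp (hζsmooth.of_le (by simp))
  have hsm : ContDiff ℝ (⊤:ℕ∞) h := (contDiff_coe.pow _).mul hζC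
  have hc : HasCompactSupport h := by
    apply HasCompactSupport.intro (isCompact_Icc (a := (-2:ℝ)) (b := 2))
    intro x hx
    simp [hh, hζout x hx]
  have hvan : ∀ t : ℝ, |t| < 1/2 → h t = 0 := by
    intro t ht
    simp [hh, hζvan t ht]
  obtain ⟨C, hC0, hC⟩ := osc_core K h hsm hc hvan
  refine ⟨C, ?_⟩
  intro Λ hΛ ℓ g hg hgb
  have hΛ0 : (0:ℝ) < Λ := lt_of_lt_of_le one_pos hΛ
  set a : ℝ := Λ ^ ((1:ℝ)/2) * 2 ^ (-(ℓ:ℝ)) with ha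
  set b : ℝ := (2:ℝ) ^ (ℓ:ℝ) * Λ ^ (-(1/2):ℝ) with hbdef
  have ha0 : 0 < a := by rw [ha]; positivity
  have hb0 : 0 < b := by rw [hbdef]; positivity
  have hab : a * b = 1 := by
    rw [ha, hbdef, show Λ ^ ((1:ℝ)/2) * 2 ^ (-(ℓ:ℝ)) * ((2:ℝ) ^ (ℓ:ℝ) * Λ ^ (-(1/2):ℝ))
        = (Λ ^ ((1:ℝ)/2) * Λ ^ (-(1/2):ℝ)) * ((2:ℝ) ^ (-(ℓ:ℝ)) * 2 ^ (ℓ:ℝ)) from by ring,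
      ← Real.rpow_add hΛ0, ← Real.rpow_add (by norm_num : (0:ℝ) < 2)]
    norm_num
  have hbinv : a⁻¹ = b := inv_eq_of_mul_eq_one_right hab
  set l : ℝ := (2:ℝ) ^ (((2*ℓ : ℕ)):ℝ) with hl
  have hlnp : l = (2:ℝ) ^ (2*ℓ : ℕ) := Real.rpow_natCast 2 (2*ℓ)
  have hl1 : 1 ≤ l := by rw [hlnp]; exact one_le_pow₀ (by norm_num)
  have hΛb : Λ * b ^ 2 = l := by
    rw [hbdef, mul_pow, ← Real.rpow_natCast ((2:ℝ) ^ (ℓ:ℝ)) 2,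
      ← Real.rpow_natCast (Λ ^ (-(1/2):ℝ)) 2,
      ← Real.rpow_mul (by norm_num : (0:ℝ) ≤ 2), ← Real.rpow_mul hΛ0.le, hl]
    rw [show (-(1/2):ℝ) * ((2:ℕ):ℝ) = -1 by push_cast; norm_num, Real.rpow_neg_one]
    rw [show ((ℓ:ℝ)) * ((2:ℕ):ℝ) = (((2*ℓ:ℕ)):ℝ) by push_cast; ring]
    field_simp
  -- the rescaled function G
  set G : ℝ → ℂ := fun t => g (a⁻¹ * t) with hG
  have hGsm : ContDiff ℝ K G := hg.comp (contDiff_const.mul contDiff_id)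
  have hDG : ∀ j, j ≤ K → iteratedDeriv j G = fun t => (a⁻¹)^j • iteratedDeriv j g (a⁻¹ * t) :=
    fun j hj => iteratedDeriv_comp_const_smul (hg.of_le (by exact_mod_cast hj)) a⁻¹
  have hpt : ∀ j, j ≤ K → ∀ t : ℝ, ‖iteratedDeriv j G t‖ ≤ b^j * ⨆ y : ℝ, ‖iteratedDeriv j g y‖ := by
    intro j hj t
    rw [hDG j hj]
    simp only [norm_smul, norm_pow, Real.norm_eq_abs, hbinv, abs_of_pos hb0]
    exact mul_le_mul_of_nonneg_left (le_ciSup (hgb j hj) (b * t)) (by positivity)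
  have hGb : ∀ j ≤ K, BddAbove (Set.range fun t => ‖iteratedDeriv j G t‖) := by
    intro j hj
    refine ⟨b^j * ⨆ y : ℝ, ‖iteratedDeriv j g y‖, ?_⟩
    rintro x ⟨t, rfl⟩
    exact hpt j hj t
  have hScore := hC l hl1 G hGsm hGb
  -- change of variables
  set F : ℝ → ℂ := fun y : ℝ => (y : ℂ) ^ (2 * M) * g y * ((ζ₁ (a * y) : ℝ) : ℂ) *
      Complex.exp (Complex.I * (Λ : ℂ) * (y : ℂ) ^ 2) with hF
  have hcv : (∫ y : ℝ, F y) = |a|⁻¹ • ∫ x : ℝ, F (a⁻¹ * x) := by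
    rw [Measure.integral_comp_inv_mul_left F a, smul_smul,
      inv_mul_cancel₀ (abs_ne_zero.mpr ha0.ne'), one_smul]
  have hinner : ∀ x : ℝ, F (a⁻¹ * x)
      = (((b:ℝ):ℂ))^(2*M) * (h x * G x * Complex.exp (Complex.I * l * (x:ℂ)^2)) := by
    intro x
    have harg : a * (a⁻¹ * x) = x := by field_simp
    have hexp : Complex.I * (Λ:ℂ) * (((a⁻¹ * x : ℝ)):ℂ)^2 = Complex.I * (l:ℂ) * (x:ℂ)^2 := by
      rw [← hΛb, hbinv]
      push_cast
      ring
    show (((a⁻¹ * x : ℝ)):ℂ) ^ (2*M) * g (a⁻¹ * x) * ((ζ₁ (a * (a⁻¹ * x)) : ℝ):ℂ) *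
        Complex.exp (Complex.I * (Λ:ℂ) * (((a⁻¹ * x : ℝ)):ℂ)^2)
      = ((b:ℝ):ℂ)^(2*M) * ((((x:ℂ)) ^ (2*M) * ((ζ₁ x : ℝ):ℂ)) * g (a⁻¹ * x) *
        Complex.exp (Complex.I * (l:ℂ) * (x:ℂ)^2))
    rw [harg, hexp, hbinv]
    push_cast
    ring
  have hJ : (∫ x : ℝ, F (a⁻¹ * x))
      = (((b:ℝ):ℂ))^(2*M) * ∫ x : ℝ, h x * G x * Complex.exp (Complex.I * l * (x:ℂ)^2) := by
    rw [← integral_const_mul]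
    exact integral_congr_ae (Filter.Eventually.of_forall hinner)
  have hnorm : ‖∫ y : ℝ, F y‖
      = b^(1+2*M) * ‖∫ x : ℝ, h x * G x * Complex.exp (Complex.I * l * (x:ℂ)^2)‖ := by
    rw [hcv, hJ, norm_smul, norm_mul, norm_inv, Real.norm_eq_abs, abs_abs, abs_of_pos ha0,
      norm_pow, Complex.norm_real, Real.norm_eq_abs, abs_of_pos hb0]
    have : a⁻¹ = b := hbinv
    rw [this, pow_add, pow_one]
    ring
  have hsum : (∑ j ∈ Finset.range (K+1), ⨆ t : ℝ, ‖iteratedDeriv j G t‖)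
      ≤ ∑ j ∈ Finset.range (K+1), b^j * ⨆ y : ℝ, ‖iteratedDeriv j g y‖ := by
    apply Finset.sum_le_sum
    intro j hj
    exact ciSup_le (hpt j (Nat.lt_succ_iff.mp (Finset.mem_range.mp hj)))
  have hlK : l ^ (-(K:ℝ)) = 2 ^ (-(2 * ℓ * K : ℝ)) := by
    rw [hl, ← Real.rpow_mul (by norm_num : (0:ℝ) ≤ 2)]
    congr 1
    push_cast
    ring
  calc ‖∫ y : ℝ, F y‖
      = b^(1+2*M) * ‖∫ x : ℝ, h x * G x * Complex.exp (Complex.I * l * (x:ℂ)^2)‖ := hnorm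
    _ ≤ b^(1+2*M) * (C * l ^ (-(K:ℝ)) * ∑ j ∈ Finset.range (K+1), ⨆ t : ℝ, ‖iteratedDeriv j G t‖) := by
        exact mul_le_mul_of_nonneg_left hScore (by positivity)
    _ ≤ b^(1+2*M) * (C * l ^ (-(K:ℝ)) *
          ∑ j ∈ Finset.range (K+1), b^j * ⨆ y : ℝ, ‖iteratedDeriv j g y‖) := by
        have hCl : 0 ≤ C * l ^ (-(K:ℝ)) := by positivity
        exact mul_le_mul_of_nonneg_left (mul_le_mul_of_nonneg_left hsum hCl) (by positivity)
    _ = C * 2 ^ (-(2 * ℓ * K : ℝ)) * b ^ (1 + 2 * M) *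
          ∑ j ∈ Finset.range (K+1), b^j * ⨆ y : ℝ, ‖iteratedDeriv j g y‖ := by
        rw [hlK]; ring
end

section
/- Let $K$ be a nonnegative integer and let $m$ be a nonnegative integer with $m<(K-1)/2$. There is a constant $C=C(K)$ such that for every compactly supported $g\in C^K(\mathbb{R})$ and every $\Lambda\ge 1$, the $m$-th derivative of the function $\Lambda\mapsto \int_{\mathbb{R}} g(y)e^{i\Lambda y^2}\,dy$ satisfies $\big|\big(\tfrac{d}{d\Lambda}\big)^m \int_{\mathbb{R}} g(y)\,e^{i\Lambda y^2}\,dy\big| \le C\,\Lambda^{-m-\frac12}\,\sum_{j=0}^{K} \Lambda^{-j/2}\,\sup_{\mathbb{R}}|g^{(j)}|$. -/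
/-!
Differentiating under the integral sign turns the `m`-th `Λ`-derivative into
`i^m ∫ g(y) y^{2m} e^{iΛy²} dy`. The substitution `y = Λ^{-1/2} z` pulls out the factor
`Λ^{-m-1/2}` and replaces `g` by `g(Λ^{-1/2} ·)`, whose `j`-th derivative carries exactly the
weight `Λ^{-j/2}`; so it suffices to bound `∫ h(z) z^{2m} e^{iz²} dz` by `∑_{j ≤ K} sup |h^{(j)}|`.
On `|z| ≤ 1` this is trivial. On `z ≥ 1` (and, by evenness, `z ≤ -1`) one integrates by parts with
`z^r e^{iz²} = z^{r-1} (e^{iz²})' / 2i`, which trades `z^r h` for `z^{r-1} h'` and `z^{r-2} h`;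
once `r ≤ -2` the power is integrable on `[1, ∞)`. Starting from `r = 2m`, this spends at most
`2m + 2 ≤ K` derivatives.
-/

open MeasureTheory Real

open Complex Set

noncomputable def iteratedDerivSupSum (s : ℕ) (g : ℝ → ℂ) : ℝ :=
  ∑ j ∈ Finset.range (s + 1), ⨆ y, ‖iteratedDeriv j g y‖

lemma norm_le_iteratedDerivSupSum {g : ℝ → ℂ} (hg : Continuous g) (hsupp : HasCompactSupport g)
    (s : ℕ) (y : ℝ) : ‖g y‖ ≤ iteratedDerivSupSum s g :=
  calc ‖g y‖ ≤ ⨆ y, ‖iteratedDeriv 0 g y‖ := by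
        rw [iteratedDeriv_zero]
        exact le_ciSup (hg.norm.bddAbove_range_of_hasCompactSupport hsupp.norm) y
    _ ≤ iteratedDerivSupSum s g :=
        Finset.single_le_sum (f := fun j => ⨆ y, ‖iteratedDeriv j g y‖)
          (fun _ _ => Real.iSup_nonneg fun _ => norm_nonneg _) (by simp)

lemma iteratedDerivSupSum_deriv_le (s : ℕ) (g : ℝ → ℂ) :
    iteratedDerivSupSum s (deriv g) ≤ iteratedDerivSupSum (s + 1) g := by
  rw [iteratedDerivSupSum, iteratedDerivSupSum, Finset.sum_range_succ' _ (s + 1)]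
  simp only [iteratedDeriv_succ']
  exact le_add_of_nonneg_right (Real.iSup_nonneg fun _ => norm_nonneg _)

lemma iteratedDerivSupSum_comp_mul {s : ℕ} {g : ℝ → ℂ} (hg : ContDiff ℝ s g) {a : ℝ}
    (ha : a ≠ 0) :
    iteratedDerivSupSum s (fun y => g (a * y)) =
      ∑ j ∈ Finset.range (s + 1), |a| ^ j * ⨆ y, ‖iteratedDeriv j g y‖ := by
  refine Finset.sum_congr rfl fun j hj => ?_
  have hj : (j : WithTop ℕ∞) ≤ s := by exact_mod_cast Finset.mem_range_succ_iff.mp hj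
  simp only [iteratedDeriv_comp_const_smul (hg.of_le hj) a, norm_smul, norm_pow, Real.norm_eq_abs]
  rw [Real.mul_iSup_of_nonneg (by positivity)]
  exact (mul_left_surjective₀ ha).iSup_comp fun y => |a| ^ j * ‖iteratedDeriv j g y‖

lemma iteratedDerivSupSum_comp_neg (s : ℕ) (g : ℝ → ℂ) :
    iteratedDerivSupSum s (fun y => g (-y)) = iteratedDerivSupSum s g := by
  refine Finset.sum_congr rfl fun j _ => ?_
  simp only [iteratedDeriv_comp_neg, norm_smul, norm_pow, norm_neg, norm_one, one_pow, one_mul]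
  exact neg_surjective.iSup_comp fun y => ‖iteratedDeriv j g y‖

lemma hasDerivAt_integral_mul_cexp {f : ℝ → ℂ} (hf : Continuous f) (hsupp : HasCompactSupport f)
    (Λ₀ : ℝ) :
    HasDerivAt (fun Λ : ℝ => ∫ y : ℝ, f y * cexp (I * Λ * (y : ℂ) ^ 2))
      (∫ y : ℝ, f y * (I * (y : ℂ) ^ 2) * cexp (I * Λ₀ * (y : ℂ) ^ 2)) Λ₀ := by
  have hF : ∀ Λ : ℝ, Continuous fun y : ℝ => f y * cexp (I * Λ * (y : ℂ) ^ 2) :=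
    fun Λ => by fun_prop
  have hF' : Continuous fun y : ℝ => f y * (I * (y : ℂ) ^ 2) * cexp (I * Λ₀ * (y : ℂ) ^ 2) := by
    fun_prop
  have hderiv : ∀ y Λ : ℝ, HasDerivAt (fun Λ : ℝ => f y * cexp (I * Λ * (y : ℂ) ^ 2))
      (f y * (I * (y : ℂ) ^ 2) * cexp (I * Λ * (y : ℂ) ^ 2)) Λ := fun y Λ => by
    have hlin : HasDerivAt (fun Λ : ℝ => I * (Λ : ℂ) * (y : ℂ) ^ 2) (I * (y : ℂ) ^ 2) Λ := by
      simpa using (Complex.ofRealCLM.hasDerivAt.const_mul I).mul_const ((y : ℂ) ^ 2)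
    exact (hlin.cexp.const_mul (f y)).congr_deriv (by ring)
  refine (hasDerivAt_integral_of_dominated_loc_of_deriv_le (μ := volume)
    (F := fun (Λ : ℝ) (y : ℝ) => f y * cexp (I * Λ * (y : ℂ) ^ 2))
    (F' := fun (Λ : ℝ) (y : ℝ) => f y * (I * (y : ℂ) ^ 2) * cexp (I * Λ * (y : ℂ) ^ 2))
    (bound := fun y => ‖f y‖ * y ^ 2) (Metric.ball_mem_nhds Λ₀ one_pos)
    (.of_forall fun Λ => (hF Λ).aestronglyMeasurable)
    ((hF Λ₀).integrable_of_hasCompactSupport hsupp.mul_right)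
    hF'.aestronglyMeasurable (.of_forall fun y Λ _ => ?_)
    ((hf.norm.mul (continuous_pow 2)).integrable_of_hasCompactSupport hsupp.norm.mul_right)
    (.of_forall fun y Λ _ => hderiv y Λ)).2
  simp [Complex.norm_exp, ← ofReal_pow]

lemma iteratedDeriv_integral_mul_cexp {f : ℝ → ℂ} (hf : Continuous f)
    (hsupp : HasCompactSupport f) (m : ℕ) :
    iteratedDeriv m (fun Λ : ℝ => ∫ y : ℝ, f y * cexp (I * Λ * (y : ℂ) ^ 2)) =
      fun Λ : ℝ => ∫ y : ℝ, f y * (I * (y : ℂ) ^ 2) ^ m * cexp (I * Λ * (y : ℂ) ^ 2) := by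
  induction m with
  | zero => simp
  | succ m ih =>
    rw [iteratedDeriv_succ, ih]
    funext Λ
    have hcont : Continuous fun y : ℝ => f y * (I * (y : ℂ) ^ 2) ^ m := by fun_prop
    have := hasDerivAt_integral_mul_cexp hcont hsupp.mul_right Λ
    rw [this.deriv]
    simp only [pow_succ, mul_assoc]

lemma integral_mul_pow_mul_cexp_rescale (g : ℝ → ℂ) (n : ℕ) {Λ a : ℝ} (ha : 0 < a)
    (hΛa : Λ * a ^ 2 = 1) :
    ∫ y : ℝ, g y * (y : ℂ) ^ n * cexp (I * Λ * (y : ℂ) ^ 2) =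
      (a : ℂ) ^ (n + 1) * ∫ z : ℝ, g (a * z) * (z : ℂ) ^ n * cexp (I * (z : ℂ) ^ 2) := by
  have hrescale : ∀ z : ℝ, g (a * z) * ((a * z : ℝ) : ℂ) ^ n * cexp (I * Λ * ((a * z : ℝ) : ℂ) ^ 2)
      = (a : ℂ) ^ n * (g (a * z) * (z : ℂ) ^ n * cexp (I * (z : ℂ) ^ 2)) := fun z => by
    have : (Λ : ℂ) * (a : ℂ) ^ 2 = 1 := by exact_mod_cast hΛa
    rw [show I * Λ * ((a * z : ℝ) : ℂ) ^ 2 = I * (z : ℂ) ^ 2 by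
      push_cast; linear_combination (I * (z : ℂ) ^ 2) * this]
    push_cast; ring
  have := Measure.integral_comp_mul_left
    (fun y : ℝ => g y * (y : ℂ) ^ n * cexp (I * Λ * (y : ℂ) ^ 2)) a
  simp only [hrescale, integral_const_mul, abs_inv, abs_of_pos ha] at this
  rw [← smul_inv_smul₀ ha.ne' (∫ y : ℝ, _), ← this, Complex.real_smul]
  ring

lemma continuousOn_ofReal_zpow (k : ℤ) {s : Set ℝ} (h0 : (0 : ℝ) ∉ s) :
    ContinuousOn (fun y : ℝ => (y : ℂ) ^ k) s :=
  continuous_ofReal.continuousOn.zpow₀ k fun _ hy =>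
    .inl (ofReal_ne_zero.mpr (ne_of_mem_of_not_mem hy h0))

lemma intervalIntegral_mul_zpow_mul_cexp_sq_by_parts {g : ℝ → ℂ} (hg : ContDiff ℝ 1 g) (r : ℤ)
    {a b : ℝ} (h0 : (0 : ℝ) ∉ uIcc a b) :
    2 * I * ∫ y in a..b, g y * (y : ℂ) ^ r * cexp (I * (y : ℂ) ^ 2) =
      g b * (b : ℂ) ^ (r - 1) * cexp (I * (b : ℂ) ^ 2)
        - g a * (a : ℂ) ^ (r - 1) * cexp (I * (a : ℂ) ^ 2)
        - (∫ y in a..b, deriv g y * (y : ℂ) ^ (r - 1) * cexp (I * (y : ℂ) ^ 2))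
        - (r - 1) * ∫ y in a..b, g y * (y : ℂ) ^ (r - 2) * cexp (I * (y : ℂ) ^ 2) := by
  have hne : ∀ y ∈ uIcc a b, (y : ℂ) ≠ 0 := fun y hy =>
    ofReal_ne_zero.mpr (ne_of_mem_of_not_mem hy h0)
  have hg' : Continuous (deriv g) := hg.continuous_deriv le_rfl
  have hu : ∀ y ∈ uIcc a b, HasDerivAt (fun y : ℝ => g y * (y : ℂ) ^ (r - 1))
      (deriv g y * (y : ℂ) ^ (r - 1) + g y * ((r - 1) * (y : ℂ) ^ (r - 2))) y := fun y hy => by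
    have hpow := (hasDerivAt_zpow (r - 1) (y : ℂ) (.inl (hne y hy))).comp_ofReal
    rw [show r - 1 - 1 = r - 2 by ring] at hpow
    push_cast at hpow
    exact ((hg.differentiable one_ne_zero y).hasDerivAt).mul hpow
  have hv : ∀ y ∈ uIcc a b, HasDerivAt (fun y : ℝ => cexp (I * (y : ℂ) ^ 2))
      (2 * I * y * cexp (I * (y : ℂ) ^ 2)) y := fun y _ => by
    have := (((hasDerivAt_pow 2 (y : ℂ)).comp_ofReal).const_mul I).cexp
    exact this.congr_deriv (by push_cast; ring)
  have hzpow := fun k => continuousOn_ofReal_zpow k h0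
  have hint₁ : IntervalIntegrable
      (fun y : ℝ => deriv g y * (y : ℂ) ^ (r - 1) * cexp (I * (y : ℂ) ^ 2)) volume a b :=
    ((hg'.continuousOn.mul (hzpow _)).mul (by fun_prop)).intervalIntegrable
  have hint₂ : IntervalIntegrable
      (fun y : ℝ => g y * (y : ℂ) ^ (r - 2) * cexp (I * (y : ℂ) ^ 2)) volume a b :=
    ((hg.continuous.continuousOn.mul (hzpow _)).mul (by fun_prop)).intervalIntegrable
  have hparts := intervalIntegral.integral_mul_deriv_eq_deriv_mul hu hv
    ((hg'.continuousOn.mul (hzpow _)).add (hg.continuous.continuousOn.mul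
      (continuousOn_const.mul (hzpow _)))).intervalIntegrable
    ((by fun_prop : Continuous fun y : ℝ => 2 * I * y * cexp (I * (y : ℂ) ^ 2)).intervalIntegrable
      a b)
  have hlhs : 2 * I * ∫ y in a..b, g y * (y : ℂ) ^ r * cexp (I * (y : ℂ) ^ 2) =
      ∫ y in a..b, g y * (y : ℂ) ^ (r - 1) * (2 * I * y * cexp (I * (y : ℂ) ^ 2)) := by
    rw [← intervalIntegral.integral_const_mul]
    refine intervalIntegral.integral_congr fun y hy => ?_
    simp only [zpow_sub_one₀ (hne y hy)]
    field_simp [hne y hy]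
  have hrhs : ∫ y in a..b, (deriv g y * (y : ℂ) ^ (r - 1) + g y * ((r - 1) * (y : ℂ) ^ (r - 2)))
        * cexp (I * (y : ℂ) ^ 2) =
      (∫ y in a..b, deriv g y * (y : ℂ) ^ (r - 1) * cexp (I * (y : ℂ) ^ 2))
        + (r - 1) * ∫ y in a..b, g y * (y : ℂ) ^ (r - 2) * cexp (I * (y : ℂ) ^ 2) := by
    rw [← intervalIntegral.integral_const_mul,
      ← intervalIntegral.integral_add hint₁ (hint₂.const_mul _)]
    exact intervalIntegral.integral_congr fun y _ => by ring
  rw [hlhs, hparts, hrhs]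
  ring

lemma norm_intervalIntegral_mul_zpow_mul_cexp_sq_le_by_parts {g : ℝ → ℂ} (hg : ContDiff ℝ 1 g)
    (r : ℤ) {R : ℝ} (hR : 1 ≤ R) (hgR : g R = 0) :
    ‖∫ y in (1 : ℝ)..R, g y * (y : ℂ) ^ r * cexp (I * (y : ℂ) ^ 2)‖ ≤
      (‖g 1‖ + ‖∫ y in (1 : ℝ)..R, deriv g y * (y : ℂ) ^ (r - 1) * cexp (I * (y : ℂ) ^ 2)‖
        + |(r : ℝ) - 1| * ‖∫ y in (1 : ℝ)..R, g y * (y : ℂ) ^ (r - 2) * cexp (I * (y : ℂ) ^ 2)‖)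
        / 2 := by
  have h0 : (0 : ℝ) ∉ uIcc 1 R := by rw [uIcc_of_le hR]; exact fun h => by linarith [h.1]
  have hparts := congrArg norm (intervalIntegral_mul_zpow_mul_cexp_sq_by_parts hg r h0)
  rw [hgR, ofReal_one, one_zpow, one_pow, mul_one, zero_mul, zero_mul, zero_sub, norm_mul,
    norm_mul, Complex.norm_two, norm_I, mul_one] at hparts
  have hr : ‖((r : ℂ) - 1)‖ = |(r : ℝ) - 1| := by
    rw [show (r : ℂ) - 1 = ((r - 1 : ℝ) : ℂ) by push_cast; rfl, norm_real, Real.norm_eq_abs]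
  rw [le_div_iff₀ two_pos, mul_comm, hparts]
  refine (norm_sub_le _ _).trans (add_le_add ((norm_sub_le _ _).trans (add_le_add ?_ le_rfl)) ?_)
  · simp [Complex.norm_exp]
  · rw [norm_mul, hr]

lemma norm_intervalIntegral_mul_zpow_mul_cexp_sq_le_of_le_neg_two {g : ℝ → ℂ} {r : ℤ}
    (hr : r ≤ -2) {R : ℝ} (hR : 1 ≤ R) {M : ℝ} (hM : ∀ y, ‖g y‖ ≤ M) :
    ‖∫ y in (1 : ℝ)..R, g y * (y : ℂ) ^ r * cexp (I * (y : ℂ) ^ 2)‖ ≤ M := by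
  have h0 : (0 : ℝ) ∉ uIcc 1 R := by rw [uIcc_of_le hR]; exact fun h => by linarith [h.1]
  have hM0 : 0 ≤ M := (norm_nonneg _).trans (hM 0)
  have hr1 : (r : ℝ) + 1 ≤ -1 := by exact_mod_cast (by omega : r + 1 ≤ -1)
  have hRr : 0 ≤ R ^ (r + 1) := zpow_nonneg (by linarith) _
  calc ‖∫ y in (1 : ℝ)..R, g y * (y : ℂ) ^ r * cexp (I * (y : ℂ) ^ 2)‖
      ≤ ∫ y in (1 : ℝ)..R, M * y ^ r := by
        refine intervalIntegral.norm_integral_le_of_norm_le hR (.of_forall fun y hy => ?_)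
          (continuousOn_const.mul (continuousOn_zpow₀ r |>.mono ?_)).intervalIntegrable
        · have hy0 : 0 < y := by linarith [hy.1]
          rw [norm_mul, norm_mul, norm_zpow, norm_real, norm_of_nonneg hy0.le, ← ofReal_pow,
            norm_exp_I_mul_ofReal, mul_one]
          exact mul_le_mul_of_nonneg_right (hM y) (zpow_nonneg hy0.le _)
        · exact fun y hy (hy0 : y = 0) => h0 (hy0 ▸ hy)
    _ = M * ((R ^ (r + 1) - 1) / (r + 1)) := by
        rw [intervalIntegral.integral_const_mul, integral_zpow (.inr ⟨by omega, h0⟩), one_zpow]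
    _ ≤ M := by
        refine mul_le_of_le_one_right hM0 ?_
        rw [div_le_iff_of_neg (by linarith)]
        linarith

theorem exists_norm_intervalIntegral_mul_zpow_mul_cexp_sq_le {r : ℤ} {s : ℕ} (hrs : r + 2 ≤ s) :
    ∃ C, 0 ≤ C ∧ ∀ g : ℝ → ℂ, ContDiff ℝ s g → HasCompactSupport g → ∀ R : ℝ, 1 ≤ R →
      tsupport g ⊆ Iio R →
      ‖∫ y in (1 : ℝ)..R, g y * (y : ℂ) ^ r * cexp (I * (y : ℂ) ^ 2)‖ ≤
        C * iteratedDerivSupSum s g := by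
  -- Integration by parts lowers `r` by one (for `g'`) or two (for `g`), until `r ≤ -2`.
  obtain ⟨n, hn⟩ : ∃ n : ℕ, r ≤ n - 2 := ⟨(r + 2).toNat, by omega⟩
  induction n using Nat.strong_induction_on generalizing r s with
  | _ n ih =>
  rcases le_or_gt r (-2) with hr | hr
  · refine ⟨1, zero_le_one, fun g hg hsupp R hR _ => ?_⟩
    rw [one_mul]
    exact norm_intervalIntegral_mul_zpow_mul_cexp_sq_le_of_le_neg_two hr hR
      (norm_le_iteratedDerivSupSum hg.continuous hsupp s)
  obtain ⟨n, rfl⟩ : ∃ k, n = k + 1 := ⟨n - 1, by omega⟩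
  obtain ⟨t, rfl⟩ : ∃ t, s = t + 1 := ⟨s - 1, by omega⟩
  obtain ⟨C₁, hC₁, h₁⟩ := ih n (by omega) (r := r - 1) (s := t) (by push_cast at hrs; omega)
    (by push_cast at hn ⊢; omega)
  obtain ⟨C₂, hC₂, h₂⟩ := ih n (by omega) (r := r - 2) (s := t + 1) (by omega)
    (by push_cast at hn ⊢; omega)
  refine ⟨(1 + C₁ + |(r : ℝ) - 1| * C₂) / 2, by positivity, fun g hg hsupp R hR hgR => ?_⟩
  have hgR0 : g R = 0 := image_eq_zero_of_notMem_tsupport fun h => lt_irrefl R (hgR h)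
  have hderiv := h₁ (deriv g) hg.deriv' hsupp.deriv R hR (tsupport_deriv_subset.trans hgR)
  have hg1 := norm_le_iteratedDerivSupSum hg.continuous hsupp (t + 1) 1
  calc _ ≤ _ :=
        norm_intervalIntegral_mul_zpow_mul_cexp_sq_le_by_parts (hg.of_le (by simp)) r hR hgR0
    _ ≤ (iteratedDerivSupSum (t + 1) g + C₁ * iteratedDerivSupSum (t + 1) g
          + |(r : ℝ) - 1| * (C₂ * iteratedDerivSupSum (t + 1) g)) / 2 := by
        gcongr
        · exact hderiv.trans (mul_le_mul_of_nonneg_left (iteratedDerivSupSum_deriv_le t g) hC₁)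
        · exact h₂ g hg hsupp R hR hgR
    _ = _ := by ring

theorem exists_norm_integral_mul_pow_mul_cexp_sq_le {m K : ℕ} (hK : 2 * m + 2 ≤ K) :
    ∃ C, ∀ h : ℝ → ℂ, ContDiff ℝ K h → HasCompactSupport h →
      ‖∫ y : ℝ, h y * (y : ℂ) ^ (2 * m) * cexp (I * (y : ℂ) ^ 2)‖ ≤
        C * iteratedDerivSupSum K h := by
  obtain ⟨C, -, hC⟩ := exists_norm_intervalIntegral_mul_zpow_mul_cexp_sq_le (r := (2 * m : ℕ))
    (s := K) (by omega)
  refine ⟨2 * C + 2, fun h hh hsupp => ?_⟩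
  set f := fun y : ℝ => h y * (y : ℂ) ^ (2 * m) * cexp (I * (y : ℂ) ^ 2) with hf
  set S := iteratedDerivSupSum K h
  obtain ⟨R, hR1, hsuppR⟩ : ∃ R : ℝ, 1 ≤ R ∧ tsupport h ⊆ Ioo (-R) R := by
    obtain ⟨R, hR⟩ := hsupp.isCompact.isBounded.subset_ball 0
    refine ⟨max R 1, le_max_right _ _, hR.trans ?_⟩
    rw [Real.ball_eq_Ioo, zero_sub, zero_add]
    exact Ioo_subset_Ioo (neg_le_neg (le_max_left _ _)) (le_max_left _ _)
  have hfint : ∀ a b : ℝ, IntervalIntegrable f volume a b := fun a b =>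
    (by fun_prop : Continuous f).intervalIntegrable a b
  have hright := hC h hh hsupp R hR1 fun y hy => (hsuppR hy).2
  have hleft := hC (fun y => h (-y)) (hh.comp contDiff_neg) (hsupp.comp_homeomorph (.neg ℝ)) R hR1
    fun y hy => by simpa using (hsuppR (tsupport_comp_subset_preimage h continuous_neg hy)).1
  rw [iteratedDerivSupSum_comp_neg] at hleft
  simp only [zpow_natCast] at hleft hright
  have hmid : ‖∫ y in (-1 : ℝ)..1, f y‖ ≤ 2 * S := by
    have hbound : ∀ y ∈ uIoc (-1 : ℝ) 1, ‖f y‖ ≤ S := fun y hy => by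
      rw [uIoc_of_le (by norm_num)] at hy
      have hy1 : |y| ≤ 1 := abs_le.mpr ⟨hy.1.le, hy.2⟩
      rw [hf, norm_mul, norm_mul, norm_pow, norm_real, Real.norm_eq_abs, ← ofReal_pow,
        norm_exp_I_mul_ofReal, mul_one]
      exact (mul_le_of_le_one_right (norm_nonneg _) (pow_le_one₀ (abs_nonneg _) hy1)).trans
        (norm_le_iteratedDerivSupSum hh.continuous hsupp K y)
    have := intervalIntegral.norm_integral_le_of_norm_le_const hbound
    rwa [show |(1 : ℝ) - -1| = 2 by norm_num, mul_comm] at this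
  have hsplit : ∫ y, f y =
      (∫ y in (-R)..(-1), f y) + (∫ y in (-1 : ℝ)..1, f y) + ∫ y in (1 : ℝ)..R, f y := by
    rw [intervalIntegral.integral_add_adjacent_intervals (hfint _ _) (hfint _ _),
      intervalIntegral.integral_add_adjacent_intervals (hfint _ _) (hfint _ _)]
    refine (intervalIntegral.integral_eq_integral_of_support_subset fun y hy => ?_).symm
    exact Ioo_subset_Ioc_self
      (hsuppR (subset_tsupport _ (left_ne_zero_of_mul (left_ne_zero_of_mul hy))))
  have hreflect : ∫ y in (-R)..(-1), f y =
      ∫ y in (1 : ℝ)..R, h (-y) * (y : ℂ) ^ (2 * m) * cexp (I * (y : ℂ) ^ 2) := by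
    rw [← intervalIntegral.integral_comp_neg]
    refine intervalIntegral.integral_congr fun y _ => ?_
    simp only [hf, ofReal_neg, neg_sq, pow_mul]
  rw [hsplit, hreflect]
  calc _ ≤ _ := norm_add₃_le
    _ ≤ C * S + 2 * S + C * S := by gcongr
    _ = (2 * C + 2) * S := by ring

theorem exists_norm_integral_mul_pow_mul_cexp_le {m K : ℕ} (hK : 2 * m + 2 ≤ K) :
    ∃ C, ∀ g : ℝ → ℂ, ContDiff ℝ K g → HasCompactSupport g → ∀ Λ : ℝ, 0 < Λ →
      ‖∫ y : ℝ, g y * (y : ℂ) ^ (2 * m) * cexp (I * Λ * (y : ℂ) ^ 2)‖ ≤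
        C * Λ ^ (-(m : ℝ) - 1 / 2) *
          ∑ j ∈ Finset.range (K + 1), Λ ^ (-(j : ℝ) / 2) * (⨆ y : ℝ, ‖iteratedDeriv j g y‖) := by
  obtain ⟨C, hC⟩ := exists_norm_integral_mul_pow_mul_cexp_sq_le hK
  refine ⟨C, fun g hg hsupp Λ hΛ => ?_⟩
  set a := Λ ^ (-(1 / 2 : ℝ))
  have ha : 0 < a := rpow_pos_of_pos hΛ _
  have hpow : ∀ j : ℕ, a ^ j = Λ ^ (-(j : ℝ) / 2) := fun j => by
    rw [← rpow_natCast, ← rpow_mul hΛ.le]; ring_nf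
  have hΛa : Λ * a ^ 2 = 1 := by
    rw [hpow, Nat.cast_two, neg_div, div_self two_ne_zero, rpow_neg_one, mul_inv_cancel₀ hΛ.ne']
  have hga : ContDiff ℝ K fun z => g (a * z) := hg.comp (contDiff_const.mul contDiff_id)
  have hsuppa : HasCompactSupport fun z => g (a * z) :=
    hsupp.comp_homeomorph (Homeomorph.mulLeft₀ a ha.ne')
  rw [integral_mul_pow_mul_cexp_rescale g (2 * m) ha hΛa, norm_mul, norm_pow, norm_real,
    norm_of_nonneg ha.le]
  refine (mul_le_mul_of_nonneg_left (hC _ hga hsuppa) (by positivity)).trans_eq ?_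
  rw [iteratedDerivSupSum_comp_mul hg ha.ne', abs_of_pos ha]
  simp only [hpow]
  rw [show -(m : ℝ) - 1 / 2 = -((2 * m + 1 : ℕ) : ℝ) / 2 by push_cast; ring]
  ring

/-- Bounds on the `Λ`-derivatives of the oscillatory integral
`Λ ↦ ∫ g(y) e^{iΛy²} dy` for compactly supported `g ∈ C^K`. -/
theorem oscillatory_integral_lambda_deriv_bound (K m : ℕ)
    (hm : (m : ℝ) < ((K : ℝ) - 1) / 2) :
    ∃ C : ℝ, ∀ g : ℝ → ℂ, ContDiff ℝ K g → HasCompactSupport g →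
      ∀ Λ : ℝ, 1 ≤ Λ →
      ‖iteratedDeriv m
          (fun Λ' : ℝ => ∫ y : ℝ, g y * Complex.exp (Complex.I * (Λ' : ℂ) * (y : ℂ) ^ 2)) Λ‖
        ≤ C * Λ ^ (-(m : ℝ) - 1/2) *
            ∑ j ∈ Finset.range (K + 1), Λ ^ (-(j : ℝ) / 2) * (⨆ y : ℝ, ‖iteratedDeriv j g y‖) := by
  have hK : 2 * m + 2 ≤ K := by
    have : ((2 * m + 1 : ℕ) : ℝ) < K := by push_cast; linarith
    exact_mod_cast this
  obtain ⟨C, hC⟩ := exists_norm_integral_mul_pow_mul_cexp_le hK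
  refine ⟨C, fun g hg hsupp Λ hΛ => ?_⟩
  have hIm : (fun y : ℝ => g y * (I * (y : ℂ) ^ 2) ^ m * cexp (I * Λ * (y : ℂ) ^ 2)) =
      fun y => I ^ m * (g y * (y : ℂ) ^ (2 * m) * cexp (I * Λ * (y : ℂ) ^ 2)) :=
    funext fun y => by ring
  rw [iteratedDeriv_integral_mul_cexp hg.continuous hsupp m]
  beta_reduce
  rw [hIm, integral_const_mul, norm_mul, norm_pow, norm_I, one_pow, one_mul]
  exact hC g hg hsupp Λ (by linarith)
end

section
/- For every $\lambda\ge 1$ and every $x\in\mathbb{R}$ one has the identity $F_\lambda(x) = \chi_1(x)\Big[\sqrt{\lambda}\int e^{i\lambda/(4s)}\,a_\lambda(s)\,e^{i\lambda s x}\,ds \;+\; \tilde\rho_\lambda(x)\Big]$. -/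
set_option maxHeartbeats 1000000

open MeasureTheory Real Complex FourierTransform

noncomputable def Flam (g : ℝ → ℂ) (lam : ℝ) (x : ℝ) : ℂ :=
  if 0 < x then g (Real.sqrt x) * Complex.exp (Complex.I * (lam : ℂ) * (Real.sqrt x : ℂ)) else 0

lemma fourier_eq (f : ℝ → ℂ) (ξ : ℝ) :
    (𝓕 f) ξ = ∫ x : ℝ, f x * Complex.exp (-2 * (π:ℂ) * Complex.I * (ξ:ℂ) * (x:ℂ)) := by
  rw [Real.fourier_eq']
  congr 1; ext x
  rw [smul_eq_mul, mul_comm]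
  congr 2
  simp only [RCLike.inner_apply, conj_trivial]
  push_cast
  ring

lemma sq_image_Ioi : (fun u : ℝ => u^2) '' Set.Ioi 0 = Set.Ioi 0 := by
  ext y
  constructor
  · rintro ⟨u, hu, rfl⟩
    exact pow_pos (Set.mem_Ioi.mp hu) 2
  · intro hy
    exact ⟨Real.sqrt y, Real.sqrt_pos.mpr hy, Real.sq_sqrt (le_of_lt hy)⟩

lemma psi_point {g : ℝ → ℂ} (hgsupp : Function.support g ⊆ Set.Ioo (1/2 : ℝ) 2)
    (lam s : ℝ) (hlam : 1 ≤ lam) (hs : 0 < s) :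
    (𝓕 (Flam g lam)) (lam * s / (2*π)) =
      Complex.exp (Complex.I * (lam:ℂ) / (4*(s:ℂ))) *
        (2 * ∫ y : ℝ, ((y + 1/(2*s) : ℝ) : ℂ) * g (y + 1/(2*s)) *
          Complex.exp (-Complex.I * (lam:ℂ) * (s:ℂ) * (y:ℂ)^2)) := by
  have hπ : (π:ℝ) ≠ 0 := Real.pi_ne_zero
  have hsC : (s:ℂ) ≠ 0 := Complex.ofReal_ne_zero.mpr hs.ne'
  rw [fourier_eq]
  -- step 1: simplify the exponent
  have step1 : (fun x : ℝ => Flam g lam x *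
      Complex.exp (-2 * (π:ℂ) * Complex.I * ((lam * s / (2*π) : ℝ):ℂ) * (x:ℂ)))
      = fun x : ℝ => Flam g lam x * Complex.exp (-Complex.I * lam * s * (x:ℂ)) := by
    funext x
    congr 2
    have : ((lam * s / (2*π) : ℝ):ℂ) = (lam:ℂ) * s / (2*(π:ℂ)) := by push_cast; ring
    rw [this]
    have hπC : ((π:ℂ)) ≠ 0 := Complex.ofReal_ne_zero.mpr hπ
    field_simp
  rw [step1]
  -- step 2: restrict to Ioi 0
  rw [← setIntegral_eq_integral_of_forall_compl_eq_zero
    (s := Set.Ioi (0:ℝ)) (fun x hx => by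
      simp only [Set.mem_Ioi, not_lt] at hx
      simp [Flam, not_lt.mpr hx] )]
  -- step 3: change of variables x = u^2
  have hderiv : ∀ u ∈ Set.Ioi (0:ℝ), HasDerivWithinAt (fun u : ℝ => u^2) (2*u) (Set.Ioi 0) u := by
    intro u hu
    simpa using (hasDerivAt_pow 2 u).hasDerivWithinAt
  have hinj : Set.InjOn (fun u : ℝ => u^2) (Set.Ioi 0) :=
    (pow_left_strictMonoOn₀ two_ne_zero).injOn.mono (fun u (hu : u ∈ Set.Ioi 0) => le_of_lt hu)
  rw [← sq_image_Ioi, integral_image_eq_integral_abs_deriv_smul measurableSet_Ioi hderiv hinj]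
  -- step 4: simplify integrand on Ioi 0
  set H : ℝ → ℂ := fun u => (2*(u:ℂ)) * g u * Complex.exp (Complex.I*(lam:ℂ)*(u:ℂ)) *
    Complex.exp (-Complex.I*(lam:ℂ)*(s:ℂ)*(u:ℂ)^2) with hH
  have step4 : Set.EqOn (fun u : ℝ => |2*u| • (Flam g lam (u^2) *
      Complex.exp (-Complex.I * (lam:ℂ) * (s:ℂ) * ((u^2:ℝ):ℂ)))) H (Set.Ioi 0) := by
    intro u hu
    have hu0 : (0:ℝ) < u := hu
    have h1 : Flam g lam (u^2) = g u * Complex.exp (Complex.I*(lam:ℂ)*(u:ℂ)) := by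
      rw [Flam, if_pos (pow_pos hu0 2), Real.sqrt_sq hu0.le]
    simp only [h1, Complex.real_smul, hH]
    rw [abs_of_pos (by linarith : (0:ℝ) < 2*u)]
    push_cast
    ring
  rw [setIntegral_congr_fun measurableSet_Ioi step4]
  -- step 5: extend to ℝ
  rw [setIntegral_eq_integral_of_forall_compl_eq_zero (fun u hu => by
    have hu0 : u ≤ 0 := by simpa [Set.mem_Ioi, not_lt] using hu
    have hg0 : g u = 0 := by
      by_contra hne
      have := hgsupp hne
      have : (1/2:ℝ) < u := this.1
      linarith
    simp [hH, hg0])]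
  -- step 6: complete the square
  have step6 : H = fun u : ℝ => Complex.exp (Complex.I*(lam:ℂ)/(4*(s:ℂ))) *
      ((2*(u:ℂ)) * g u * Complex.exp (-Complex.I*(lam:ℂ)*(s:ℂ)*((u:ℂ) - 1/(2*(s:ℂ)))^2)) := by
    funext u
    have hexp : Complex.I*(lam:ℂ)*(u:ℂ) + (-Complex.I*(lam:ℂ)*(s:ℂ)*(u:ℂ)^2)
        = Complex.I*(lam:ℂ)/(4*(s:ℂ)) + (-Complex.I*(lam:ℂ)*(s:ℂ)*((u:ℂ) - 1/(2*(s:ℂ)))^2) := by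
      field_simp
      ring
    simp only [hH]
    rw [mul_assoc ((2*(u:ℂ)) * g u), ← Complex.exp_add, hexp, Complex.exp_add]
    ring
  rw [step6, integral_const_mul]
  -- step 7: translation
  rw [← integral_add_right_eq_self (fun u : ℝ => (2*(u:ℂ)) * g u *
    Complex.exp (-Complex.I*(lam:ℂ)*(s:ℂ)*((u:ℂ) - 1/(2*(s:ℂ)))^2)) (1/(2*s))]
  congr 1
  rw [← integral_const_mul]
  congr 1
  funext y
  have hcast : ((y + 1/(2*s) : ℝ):ℂ) = (y:ℂ) + 1/(2*(s:ℂ)) := by push_cast; ring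
  rw [hcast]
  ring_nf


lemma fourierInv_eq (f : ℝ → ℂ) (x : ℝ) :
    (𝓕⁻ f) x = ∫ ξ : ℝ, f ξ * Complex.exp (2 * (π:ℂ) * Complex.I * (x:ℂ) * (ξ:ℂ)) := by
  rw [Real.fourierInv_eq']
  congr 1; ext ξ
  rw [smul_eq_mul, mul_comm]
  congr 2
  simp only [RCLike.inner_apply, conj_trivial]
  push_cast
  ring

lemma Flam_eq_zero {g : ℝ → ℂ} (hgsupp : Function.support g ⊆ Set.Ioo (1/2 : ℝ) 2)
    (lam : ℝ) {x : ℝ} (hx : x ∉ Set.Ioo (1/4 : ℝ) 4) :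
    Flam g lam x = 0 := by
  unfold Flam
  split_ifs with h0
  · have hg0 : g (Real.sqrt x) = 0 := by
      by_contra hne
      have := hgsupp hne
      apply hx
      constructor
      · have : (1/2:ℝ) < Real.sqrt x := this.1
        nlinarith [Real.sq_sqrt h0.le, Real.sqrt_nonneg x]
      · have h2 : Real.sqrt x < 2 := this.2
        nlinarith [Real.sq_sqrt h0.le, Real.sqrt_nonneg x]
    simp [hg0]
  · rfl

lemma Flam_contDiff {g : ℝ → ℂ} (hgsupp : Function.support g ⊆ Set.Ioo (1/2 : ℝ) 2)
    {K : ℕ} (hK : 2 ≤ K) (hg : ContDiff ℝ K g) (lam : ℝ) :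
    ContDiff ℝ 2 (Flam g lam) := by
  have hg2 : ContDiff ℝ 2 g := hg.of_le (by exact_mod_cast hK)
  rw [contDiff_iff_contDiffAt]
  intro x
  rcases lt_or_ge x (1/5 : ℝ) with hx | hx
  · apply ContDiffAt.congr_of_eventuallyEq contDiffAt_const
    filter_upwards [Iio_mem_nhds (show x < 1/4 by linarith)] with y hy
    exact Flam_eq_zero hgsupp lam
      (by simp only [Set.mem_Ioo]; push_neg; intro h; linarith [Set.mem_Iio.mp hy])
  · have hx0 : (0:ℝ) < x := by linarith
    have h1 : ContDiffAt ℝ 2 (fun y : ℝ => g (Real.sqrt y)) x :=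
      hg2.contDiffAt.comp x (contDiffAt_sqrt hx0.ne')
    have h2 : ContDiffAt ℝ 2
        (fun y : ℝ => Complex.exp (Complex.I * (lam : ℂ) * (Real.sqrt y : ℂ))) x := by
      apply ContDiffAt.cexp
      exact contDiffAt_const.mul
        (Complex.ofRealCLM.contDiff.contDiffAt.comp x (contDiffAt_sqrt hx0.ne'))
    apply (h1.mul h2).congr_of_eventuallyEq
    filter_upwards [Ioi_mem_nhds hx0] with y hy
    simp only [Flam, if_pos (Set.mem_Ioi.mp hy)]

lemma Flam_hcs {g : ℝ → ℂ} (hgsupp : Function.support g ⊆ Set.Ioo (1/2 : ℝ) 2) (lam : ℝ) :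
    HasCompactSupport (Flam g lam) := by
  apply HasCompactSupport.intro (isCompact_Icc (a := (1/4:ℝ)) (b := 4))
  intro x hx
  exact Flam_eq_zero hgsupp lam (fun hc => hx ⟨hc.1.le, hc.2.le⟩)

lemma integrable_fourier_of_C2 {f : ℝ → ℂ} (hf : ContDiff ℝ 2 f) (hcs : HasCompactSupport f) :
    Integrable (𝓕 f) := by
  have hf' : ContDiff ℝ (1+1) f := by exact_mod_cast hf
  have hf1 : ContDiff ℝ 1 (deriv f) := (contDiff_succ_iff_deriv.mp hf').2.2
  have hd1 : Continuous (deriv f) := hf1.continuous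
  have hd2 : Continuous (deriv (deriv f)) := (contDiff_one_iff_deriv.mp hf1).2
  have hi0 : Integrable f := hf.continuous.integrable_of_hasCompactSupport hcs
  have hi1 : Integrable (deriv f) := hd1.integrable_of_hasCompactSupport hcs.deriv
  have hi2 : Integrable (deriv (deriv f)) := hd2.integrable_of_hasCompactSupport hcs.deriv.deriv
  have hF2 : 𝓕 (deriv (deriv f)) = fun ξ : ℝ =>
      (2 * π * Complex.I * ξ) • ((2 * π * Complex.I * ξ) • 𝓕 f ξ) := by
    rw [Real.fourier_deriv hi1 (hf1.differentiable one_ne_zero) hi2,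
      Real.fourier_deriv hi0 (hf'.differentiable (by norm_num)) hi1]
  set A := ∫ x : ℝ, ‖f x‖ with hA
  set B := ∫ x : ℝ, ‖deriv (deriv f) x‖ with hB
  have key : ∀ ξ : ℝ, ‖𝓕 f ξ‖ ≤ (A + B) * (1 + ξ^2)⁻¹ := by
    intro ξ
    have h1 : ‖𝓕 f ξ‖ ≤ A := VectorFourier.norm_fourierIntegral_le_integral_norm _ _ _ _ _
    have h2 : ‖𝓕 (deriv (deriv f)) ξ‖ ≤ B :=
      VectorFourier.norm_fourierIntegral_le_integral_norm _ _ _ _ _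
    have h3 : ‖𝓕 (deriv (deriv f)) ξ‖ = (2*π*|ξ|)^2 * ‖𝓕 f ξ‖ := by
      rw [hF2]
      rw [norm_smul, norm_smul]
      have hn : ‖(2 * (π:ℂ) * Complex.I * (ξ:ℂ))‖ = 2*π*|ξ| := by
        simp only [norm_mul, Complex.norm_I, Complex.norm_real, Real.norm_eq_abs, mul_one]
        rw [abs_of_pos Real.pi_pos]
        norm_num
      rw [hn]; ring
    have hπ : (1:ℝ) ≤ 2*π := by nlinarith [Real.pi_gt_three]
    have h4 : ξ^2 * ‖𝓕 f ξ‖ ≤ B := by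
      calc ξ^2 * ‖𝓕 f ξ‖ ≤ (2*π*|ξ|)^2 * ‖𝓕 f ξ‖ := by
            apply mul_le_mul_of_nonneg_right _ (norm_nonneg _)
            have h5 : (2*π*|ξ|)^2 = (2*π)^2 * ξ^2 := by
              rw [mul_pow, _root_.sq_abs]
            rw [h5]
            have h6 : (1:ℝ) ≤ (2*π)^2 := by nlinarith
            nlinarith [mul_le_mul_of_nonneg_right h6 (sq_nonneg ξ)]
        _ = ‖𝓕 (deriv (deriv f)) ξ‖ := h3.symm
        _ ≤ B := h2
    have hpos : (0:ℝ) < 1 + ξ^2 := by positivity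
    rw [← div_eq_mul_inv, le_div_iff₀ hpos]
    nlinarith [h1, h4]
  have hmeas : AEStronglyMeasurable (𝓕 f) volume :=
    (VectorFourier.fourierIntegral_continuous Real.continuous_fourierChar
      (by exact continuous_inner) hi0).aestronglyMeasurable
  apply Integrable.mono' (g := fun ξ : ℝ => (A + B) * (1 + ξ^2)⁻¹)
    ((integrable_inv_one_add_sq).const_mul (A+B)) hmeas
  exact Filter.Eventually.of_forall key

/-- The subordination identity
`g(√x) e^{iλ√x} = χ₁(x) [ √λ ∫ e^{iλ/(4s)} a_λ(s) e^{iλsx} ds + ρ̃_λ(x) ]`. -/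
theorem subordination_identity (K : ℕ) (hK : 2 ≤ K)
    (g : ℝ → ℂ) (hg : ContDiff ℝ K g)
    (hgsupp : Function.support g ⊆ Set.Ioo (1/2 : ℝ) 2)
    (χ₁ : ℝ → ℂ) (hχsmooth : ContDiff ℝ (⊤ : ℕ∞) χ₁) (hχcpt : HasCompactSupport χ₁)
    (hχone : ∀ x ∈ Set.Ioo (1/4 : ℝ) 4, χ₁ x = 1)
    (ς : ℝ → ℝ) (hςsmooth : ContDiff ℝ (⊤ : ℕ∞) ς)
    (hςsupp : Function.support ς ⊆ Set.Icc (1/9 : ℝ) 3)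
    (hςone : ∀ s ∈ Set.Icc (1/8 : ℝ) 2, ς s = 1)
    (F : ℝ → ℝ → ℂ)
    (hF : ∀ lam x, F lam x =
      if 0 < x then g (Real.sqrt x) * Complex.exp (Complex.I * (lam : ℂ) * (Real.sqrt x : ℂ))
      else 0)
    (Ψ : ℝ → ℝ → ℂ)
    (hΨ : ∀ lam ξ, Ψ lam ξ =
      ∫ x : ℝ, F lam x * Complex.exp (-2 * (Real.pi : ℂ) * Complex.I * (ξ : ℂ) * (x : ℂ)))
    (a : ℝ → ℝ → ℂ)
    (ha : ∀ lam s, a lam s =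
      if ς s ≠ 0 then
        (Real.pi : ℂ)⁻¹ * (Real.sqrt lam : ℂ) * (ς s : ℂ) *
          ∫ y : ℝ, ((y + 1/(2*s) : ℝ) : ℂ) * g (y + 1/(2*s)) *
            Complex.exp (-Complex.I * (lam : ℂ) * (s : ℂ) * (y : ℂ) ^ 2)
      else 0)
    (ρ : ℝ → ℝ → ℂ)
    (hρ : ∀ lam x, ρ lam x =
      ∫ ξ : ℝ, (1 - (ς (2 * Real.pi * ξ / lam) : ℂ)) * Ψ lam ξ *
        Complex.exp (2 * (Real.pi : ℂ) * Complex.I * (x : ℂ) * (ξ : ℂ))) :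
    ∀ lam : ℝ, 1 ≤ lam → ∀ x : ℝ,
      F lam x = χ₁ x *
        ((Real.sqrt lam : ℂ) *
            (∫ s : ℝ, Complex.exp (Complex.I * (lam : ℂ) / (4 * (s : ℂ))) * a lam s *
              Complex.exp (Complex.I * (lam : ℂ) * (s : ℂ) * (x : ℂ)))
          + ρ lam x) := by
  intro lam hlam x
  have hlam0 : (0:ℝ) < lam := lt_of_lt_of_le one_pos hlam
  have hπ : (0:ℝ) < π := Real.pi_pos
  have hsqrt0 : (0:ℝ) < Real.sqrt lam := Real.sqrt_pos.mpr hlam0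
  set f : ℝ → ℂ := Flam g lam with hfdef
  have hFeq : F lam = f := funext fun y => by rw [hF]; rfl
  have hC2 : ContDiff ℝ 2 f := Flam_contDiff hgsupp hK hg lam
  have hcs : HasCompactSupport f := Flam_hcs hgsupp lam
  have hi0 : Integrable f := hC2.continuous.integrable_of_hasCompactSupport hcs
  have hiF : Integrable (𝓕 f) := integrable_fourier_of_C2 hC2 hcs
  have hΨeq : ∀ ξ, Ψ lam ξ = 𝓕 f ξ := fun ξ => by rw [hΨ, fourier_eq, hFeq]
  have hcontF : Continuous (𝓕 f) :=
    VectorFourier.fourierIntegral_continuous Real.continuous_fourierChar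
      (by exact continuous_inner) hi0
  -- Fourier inversion
  have hinv : f x = ∫ ξ : ℝ, 𝓕 f ξ * Complex.exp (2*(π:ℂ)*Complex.I*(x:ℂ)*(ξ:ℂ)) := by
    have h1 := congrFun (hC2.continuous.fourierInv_fourier_eq hi0 hiF) x
    rw [fourierInv_eq] at h1
    exact h1.symm
  -- bound for ς
  have hςcs : HasCompactSupport ς :=
    HasCompactSupport.intro isCompact_Icc (fun y hy => by
      by_contra hne; exact hy (hςsupp hne))
  obtain ⟨C, hC⟩ := hςcs.exists_bound_of_continuous hςsmooth.continuous
  have hC0 : (0:ℝ) ≤ C := le_trans (norm_nonneg _) (hC 0)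
  -- the phase has norm 1
  have hexp1 : ∀ ξ : ℝ, ‖Complex.exp (2*(π:ℂ)*Complex.I*(x:ℂ)*(ξ:ℂ))‖ = 1 := by
    intro ξ
    have : (2*(π:ℂ)*Complex.I*(x:ℂ)*(ξ:ℂ)) = ((2*π*x*ξ : ℝ):ℂ) * Complex.I := by
      push_cast; ring
    rw [this]
    exact Complex.norm_exp_ofReal_mul_I _
  -- integrability of the two pieces
  have hint1 : Integrable (fun ξ : ℝ => (ς (2*π*ξ/lam) : ℂ) * 𝓕 f ξ *
      Complex.exp (2*(π:ℂ)*Complex.I*(x:ℂ)*(ξ:ℂ))) := by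
    have hre : (fun ξ : ℝ => (ς (2*π*ξ/lam) : ℂ) * 𝓕 f ξ *
        Complex.exp (2*(π:ℂ)*Complex.I*(x:ℂ)*(ξ:ℂ)))
        = fun ξ : ℝ => ((ς (2*π*ξ/lam) : ℂ) *
            Complex.exp (2*(π:ℂ)*Complex.I*(x:ℂ)*(ξ:ℂ))) * 𝓕 f ξ := by
      funext ξ; ring
    rw [hre]
    apply hiF.bdd_mul (c := C)
    · apply Continuous.aestronglyMeasurable
      apply Continuous.mul
      · exact Complex.continuous_ofReal.comp (hςsmooth.continuous.comp (by continuity))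
      · continuity
    · refine Filter.Eventually.of_forall (fun ξ => ?_)
      rw [norm_mul, hexp1, mul_one, Complex.norm_real]
      exact hC _
  have hint2 : Integrable (fun ξ : ℝ => (1 - (ς (2*π*ξ/lam) : ℂ)) * 𝓕 f ξ *
      Complex.exp (2*(π:ℂ)*Complex.I*(x:ℂ)*(ξ:ℂ))) := by
    have hre : (fun ξ : ℝ => (1 - (ς (2*π*ξ/lam) : ℂ)) * 𝓕 f ξ *
        Complex.exp (2*(π:ℂ)*Complex.I*(x:ℂ)*(ξ:ℂ)))
        = fun ξ : ℝ => ((1 - (ς (2*π*ξ/lam) : ℂ)) *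
            Complex.exp (2*(π:ℂ)*Complex.I*(x:ℂ)*(ξ:ℂ))) * 𝓕 f ξ := by
      funext ξ; ring
    rw [hre]
    apply hiF.bdd_mul (c := 1 + C)
    · apply Continuous.aestronglyMeasurable
      apply Continuous.mul
      · exact continuous_const.sub
          (Complex.continuous_ofReal.comp (hςsmooth.continuous.comp (by continuity)))
      · continuity
    · refine Filter.Eventually.of_forall (fun ξ => ?_)
      rw [norm_mul, hexp1, mul_one]
      calc ‖1 - ((ς (2*π*ξ/lam)) : ℂ)‖ ≤ ‖(1:ℂ)‖ + ‖((ς (2*π*ξ/lam)) : ℂ)‖ := norm_sub_le _ _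
        _ ≤ 1 + C := by
            rw [norm_one, Complex.norm_real]
            exact add_le_add_right (hC _) 1
  -- split the inversion integral
  have hsplit : (∫ ξ : ℝ, 𝓕 f ξ * Complex.exp (2*(π:ℂ)*Complex.I*(x:ℂ)*(ξ:ℂ)))
      = (∫ ξ : ℝ, (ς (2*π*ξ/lam) : ℂ) * 𝓕 f ξ *
          Complex.exp (2*(π:ℂ)*Complex.I*(x:ℂ)*(ξ:ℂ)))
        + ∫ ξ : ℝ, (1 - (ς (2*π*ξ/lam) : ℂ)) * 𝓕 f ξ *
            Complex.exp (2*(π:ℂ)*Complex.I*(x:ℂ)*(ξ:ℂ)) := by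
    rw [← integral_add hint1 hint2]
    congr 1; funext ξ; ring
  have hρeq : ρ lam x = ∫ ξ : ℝ, (1 - (ς (2*π*ξ/lam) : ℂ)) * 𝓕 f ξ *
      Complex.exp (2*(π:ℂ)*Complex.I*(x:ℂ)*(ξ:ℂ)) := by
    rw [hρ]; congr 1; funext ξ; rw [hΨeq]
  -- low frequency part
  have hlow : (∫ ξ : ℝ, (ς (2*π*ξ/lam) : ℂ) * 𝓕 f ξ *
      Complex.exp (2*(π:ℂ)*Complex.I*(x:ℂ)*(ξ:ℂ)))
      = (Real.sqrt lam : ℂ) *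
          ∫ s : ℝ, Complex.exp (Complex.I * (lam:ℂ) / (4 * (s:ℂ))) * a lam s *
            Complex.exp (Complex.I * (lam:ℂ) * (s:ℂ) * (x:ℂ)) := by
    set G : ℝ → ℂ := fun ξ => (ς (2*π*ξ/lam) : ℂ) * 𝓕 f ξ *
      Complex.exp (2*(π:ℂ)*Complex.I*(x:ℂ)*(ξ:ℂ)) with hG
    set c : ℝ := lam/(2*π) with hc
    have hc0 : 0 < c := by positivity
    have hcv : (∫ ξ : ℝ, G ξ) = c • ∫ u : ℝ, G (c * u) := by
      rw [MeasureTheory.Measure.integral_comp_mul_left G c, smul_smul,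
        abs_of_pos (inv_pos.mpr hc0), mul_inv_cancel₀ hc0.ne', one_smul]
    have hpt : ∀ u : ℝ, G (c * u) = ((2*π/Real.sqrt lam : ℝ)) •
        (Complex.exp (Complex.I * (lam:ℂ) / (4*(u:ℂ))) * a lam u *
          Complex.exp (Complex.I * (lam:ℂ) * (u:ℂ) * (x:ℂ))) := by
      intro u
      have harg : 2*π*(c*u)/lam = u := by
        rw [hc]; field_simp
      by_cases hu : ς u = 0
      · have ha0 : a lam u = 0 := by rw [ha]; simp [hu]
        simp [hG, harg, hu, ha0]
      · have humem := hςsupp hu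
        have hu0 : (0:ℝ) < u := lt_of_lt_of_le (by norm_num) humem.1
        have hCU : c * u = lam * u / (2*π) := by rw [hc]; ring
        have hπC : ((π:ℝ):ℂ) ≠ 0 := Complex.ofReal_ne_zero.mpr hπ.ne'
        have hexpeq : Complex.exp (2*(π:ℂ)*Complex.I*(x:ℂ)*((c*u : ℝ):ℂ))
            = Complex.exp (Complex.I * (lam:ℂ) * (u:ℂ) * (x:ℂ)) := by
          congr 1
          rw [hCU]
          push_cast
          field_simp
        simp only [hG, harg, hexpeq]
        rw [hCU, psi_point hgsupp lam u hlam hu0, ha, if_pos hu, Complex.real_smul]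
        have h1 : ((Real.sqrt lam : ℝ):ℂ) ≠ 0 := Complex.ofReal_ne_zero.mpr hsqrt0.ne'
        have h2 : ((π:ℝ):ℂ) ≠ 0 := Complex.ofReal_ne_zero.mpr hπ.ne'
        push_cast
        field_simp
        ring_nf
        congr 1
        congr 1
        funext y
        ring_nf
    calc (∫ ξ : ℝ, G ξ) = c • ∫ u : ℝ, G (c*u) := hcv
      _ = c • ((2*π/Real.sqrt lam : ℝ) •
          ∫ s : ℝ, Complex.exp (Complex.I * (lam:ℂ) / (4*(s:ℂ))) * a lam s *
            Complex.exp (Complex.I * (lam:ℂ) * (s:ℂ) * (x:ℂ))) := by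
          rw [show (fun u : ℝ => G (c*u)) = fun u : ℝ => ((2*π/Real.sqrt lam : ℝ)) •
            (Complex.exp (Complex.I * (lam:ℂ) / (4*(u:ℂ))) * a lam u *
              Complex.exp (Complex.I * (lam:ℂ) * (u:ℂ) * (x:ℂ))) from funext hpt,
            integral_smul]
      _ = (Real.sqrt lam : ℂ) *
          ∫ s : ℝ, Complex.exp (Complex.I * (lam:ℂ) / (4*(s:ℂ))) * a lam s *
            Complex.exp (Complex.I * (lam:ℂ) * (s:ℂ) * (x:ℂ)) := by
          rw [smul_smul]
          have : c * (2*π/Real.sqrt lam) = Real.sqrt lam := by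
            rw [hc]
            rw [show lam / (2*π) * (2*π/Real.sqrt lam) = lam / Real.sqrt lam by
              field_simp]
            exact Real.div_sqrt
          rw [this, Complex.real_smul]
  -- conclusion
  have hkey : f x = (Real.sqrt lam : ℂ) *
      (∫ s : ℝ, Complex.exp (Complex.I * (lam:ℂ) / (4 * (s:ℂ))) * a lam s *
        Complex.exp (Complex.I * (lam:ℂ) * (s:ℂ) * (x:ℂ))) + ρ lam x := by
    rw [hinv, hsplit, hlow, hρeq]
  rw [hFeq]
  by_cases hx : x ∈ Set.Ioo (1/4 : ℝ) 4
  · rw [hχone x hx, one_mul]; exact hkey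
  · have h0 : f x = 0 := Flam_eq_zero hgsupp lam hx
    rw [h0, ← hkey, h0, mul_zero]
end

section
/- Let $n=2m$ with $m\ge 1$, let $\sigma>0$, let $0<\tau<\pi$, let $z\in\mathbb{R}^n$, and let $S$ be a real skew-symmetric $n\times n$ matrix with $S^2=-(\sigma\tau)^2 I_n$. With $g(\tau)=\tau\cot\tau$, the $(n+1)\times(n+1)$ block matrix $\begin{pmatrix} 2\sigma g(\tau) I_n - 2S & 2\,(\tau g'(\tau)-g(\tau))\,z \\ 2\,(g(\tau)-\tau g'(\tau))\,z^{\mathsf T} & -|z|^2\,\sigma^{-1}\tau^2 g''(\tau) \end{pmatrix}$ has determinant $2^{\,n+1}\,|z|^2\,\sigma^{\,n-1}\,\big(\tfrac{\tau}{\sin\tau}\big)^{n+2}$. -/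
open Matrix Polynomial Real Topology

/-! Write the upper-left block as `a • 1 - T` with `a = 2σ g(τ)` and `T = 2S`, so `T² = -c`
with `c = (2στ)²`. Then `(a - T)(a + T) = a² + c`, which inverts the block, and the characteristic
polynomial of `T`, whose square is `(X² + c)ⁿ` because `T` and `-T = Tᵀ` share it, is
`(X² + c)^m`. Skewness kills `zᵀ T z`, so the Schur complement only sees `a |z|²`; finally
`a² + c = (2στ / sin τ)²`, and the rest is algebra with `g`, `g'`, `g''`. -/

theorem Polynomial.Monic.eq_of_mul_self_eq {R : Type*} [CommRing R] [IsDomain R] {p q : R[X]}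
    (hp : p.Monic) (hq : q.Monic) (h : p * p = q * q) : p = q := by
  obtain h | h := mul_self_eq_mul_self_iff.mp h
  · exact h
  · have hneg : (-1 : R) = 1 := by simpa [h, hq.leadingCoeff] using hp.leadingCoeff
    calc p = C (-1) * q := by rw [h, C_neg, C_1, neg_one_mul]
      _ = q := by rw [hneg, C_1, one_mul]

namespace Matrix

variable {ι R : Type*} [Fintype ι]

theorem smul_one_sub_mul_smul_one_add [DecidableEq ι] [CommRing R] {T : Matrix ι ι R} {c : R}
    (hT : T * T = (-c) • 1) (a : R) :
    (a • 1 - T) * (a • 1 + T) = (a ^ 2 + c) • (1 : Matrix ι ι R) := by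
  simp only [sub_mul, mul_add, Matrix.smul_mul, Matrix.mul_smul, one_mul, mul_one, smul_smul, hT]
  module

theorem dotProduct_mulVec_self_eq_zero_of_transpose_eq_neg [CommRing R] [NoZeroDivisors R]
    [CharZero R] {T : Matrix ι ι R} (hskew : Tᵀ = -T) (z : ι → R) : z ⬝ᵥ T *ᵥ z = 0 := by
  rw [← CharZero.eq_neg_self_iff]
  calc z ⬝ᵥ T *ᵥ z = Tᵀ *ᵥ z ⬝ᵥ z := by rw [dotProduct_mulVec, mulVec_transpose]
    _ = -(z ⬝ᵥ T *ᵥ z) := by rw [hskew, neg_mulVec, neg_dotProduct, dotProduct_comm]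

theorem charpoly_eq_of_transpose_eq_neg [DecidableEq ι] [CommRing R] [IsDomain R] {m : ℕ}
    (hι : Fintype.card ι = 2 * m) {T : Matrix ι ι R} (hskew : Tᵀ = -T) {c : R}
    (hT : T * T = (-c) • 1) : T.charpoly = (X ^ 2 + C c) ^ m := by
  set Tc := (C : R →+* R[X]).mapMatrix T
  have hTc : Tc * Tc = (-C c) • (1 : Matrix ι ι R[X]) := by
    rw [← map_mul, hT]; ext i j; by_cases h : i = j <;> simp [h]
  refine T.charpoly_monic.eq_of_mul_self_eq ((monic_X_pow_add_C c two_ne_zero).pow m) ?_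
  calc T.charpoly * T.charpoly = T.charpoly * (-T).charpoly := by
        rw [← hskew, charpoly_transpose]
    _ = ((X ^ 2 + C c) • (1 : Matrix ι ι R[X])).det := by
        rw [charpoly, charpoly, ← det_mul, charmatrix, charmatrix, map_neg, scalar_apply,
          ← smul_one_eq_diagonal, sub_neg_eq_add, smul_one_sub_mul_smul_one_add hTc]
    _ = _ := by rw [det_smul, det_one, mul_one, hι]; ring

theorem det_smul_one_sub_of_transpose_eq_neg [DecidableEq ι] [CommRing R] [IsDomain R] {m : ℕ}
    (hι : Fintype.card ι = 2 * m) {T : Matrix ι ι R} (hskew : Tᵀ = -T) {c : R}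
    (hT : T * T = (-c) • 1) (a : R) : (a • 1 - T).det = (a ^ 2 + c) ^ m := by
  rw [smul_one_eq_diagonal, ← scalar_apply, ← eval_charpoly,
    charpoly_eq_of_transpose_eq_neg hι hskew hT]
  simp

theorem row_mul_mul_col_apply [CommRing R] (M : Matrix ι ι R) (y z : ι → R) :
    (of (fun (_ : Fin 1) j => y j) * M * of fun i (_ : Fin 1) => z i) 0 0 = y ⬝ᵥ M *ᵥ z := by
  simp only [mul_apply, of_apply, dotProduct, mulVec, Finset.sum_mul, Finset.mul_sum]
  rw [Finset.sum_comm]; simp only [mul_assoc]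

theorem det_fromBlocks_smul_one_sub_of_transpose_eq_neg [DecidableEq ι] {K : Type*} [Field K]
    [CharZero K] {m : ℕ} (hι : Fintype.card ι = 2 * m) {T : Matrix ι ι K} (hskew : Tᵀ = -T) {c : K}
    (hT : T * T = (-c) • 1) {a : K} (ha : a ^ 2 + c ≠ 0) (z : ι → K) (β γ d : K) :
    (fromBlocks (a • 1 - T) (of fun i (_ : Fin 1) => β * z i) (of fun (_ : Fin 1) j => γ * z j)
      (of fun _ _ => d)).det =
      (a ^ 2 + c) ^ m * (d - γ * β * a * (z ⬝ᵥ z) / (a ^ 2 + c)) := by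
  have hinv : (a • 1 - T) * ((a ^ 2 + c)⁻¹ • (a • 1 + T)) = 1 := by
    rw [Matrix.mul_smul, smul_one_sub_mul_smul_one_add hT, smul_smul, inv_mul_cancel₀ ha,
      one_smul]
  have : Invertible (a • 1 - T) := invertibleOfRightInverse _ _ hinv
  rw [det_fromBlocks₁₁, invOf_eq_right_inv hinv,
    det_smul_one_sub_of_transpose_eq_neg hι hskew hT, det_fin_one, sub_apply, row_mul_mul_col_apply]
  have hquad : (γ • z) ⬝ᵥ ((a ^ 2 + c)⁻¹ • (a • 1 + T)) *ᵥ (β • z)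
      = γ * β * a * (z ⬝ᵥ z) / (a ^ 2 + c) := by
    simp only [mulVec_smul, smul_mulVec, add_mulVec, one_mulVec, dotProduct_smul,
      smul_dotProduct, dotProduct_add, dotProduct_mulVec_self_eq_zero_of_transpose_eq_neg hskew,
      smul_eq_mul]
    field_simp
    ring
  exact congrArg _ (congrArg (d - ·) hquad)

end Matrix

namespace Real

theorem hasDerivAt_cos_div_sin {t : ℝ} (h : sin t ≠ 0) :
    HasDerivAt (fun t => cos t / sin t) (-1 / sin t ^ 2) t :=
  ((hasDerivAt_cos t).div (hasDerivAt_sin t) h).congr_deriv (by rw [← sin_sq_add_cos_sq t]; ring)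

theorem hasDerivAt_mul_cos_div_sin {t : ℝ} (h : sin t ≠ 0) :
    HasDerivAt (fun t => t * (cos t / sin t)) (cos t / sin t - t / sin t ^ 2) t :=
  ((hasDerivAt_id t).mul (hasDerivAt_cos_div_sin h)).congr_deriv (by simp only [id]; ring)

theorem deriv_deriv_mul_cos_div_sin {t : ℝ} (h : sin t ≠ 0) :
    deriv (deriv fun t => t * (cos t / sin t)) t = -2 / sin t ^ 2 + 2 * t * cos t / sin t ^ 3 := by
  have hderiv : deriv (fun t => t * (cos t / sin t)) =ᶠ[𝓝 t]
      fun t => cos t / sin t - t / sin t ^ 2 := by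
    filter_upwards [(isOpen_ne.preimage continuous_sin).mem_nhds h] with u hu
    exact (hasDerivAt_mul_cos_div_sin hu).deriv
  rw [hderiv.deriv_eq]
  refine ((hasDerivAt_cos_div_sin h).sub
    ((hasDerivAt_id t).div ((hasDerivAt_sin t).pow 2) (pow_ne_zero 2 h))).deriv.trans ?_
  simp only [Pi.pow_apply, id]
  field_simp
  ring

end Real

/-- The determinant of the mixed Hessian block matrix arising in the
Fourier integral operator analysis equals `2^{n+1} |z|² σ^{n-1} (τ/sin τ)^{n+2}`. -/
theorem mixed_hessian_determinant (m : ℕ) (hm : 1 ≤ m) (n : ℕ) (hn : n = 2 * m)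
    (σ τ : ℝ) (hσ : 0 < σ) (hτ : 0 < τ) (hτπ : τ < Real.pi)
    (z : Fin n → ℝ)
    (S : Matrix (Fin n) (Fin n) ℝ) (hskew : Sᵀ = -S)
    (hS2 : S * S = (-((σ * τ) ^ 2)) • (1 : Matrix (Fin n) (Fin n) ℝ))
    (g : ℝ → ℝ) (hg : ∀ t, g t = t * (Real.cos t / Real.sin t)) :
    (Matrix.fromBlocks
        ((2 * σ * g τ) • (1 : Matrix (Fin n) (Fin n) ℝ) - (2 : ℝ) • S)
        (Matrix.of fun i (_ : Fin 1) => 2 * (τ * deriv g τ - g τ) * z i)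
        (Matrix.of fun (_ : Fin 1) j => 2 * (g τ - τ * deriv g τ) * z j)
        (Matrix.of fun (_ : Fin 1) (_ : Fin 1) =>
          -(z ⬝ᵥ z) * σ⁻¹ * τ ^ 2 * deriv (deriv g) τ)).det
      = 2 ^ (n + 1) * (z ⬝ᵥ z) * σ ^ (n - 1) * (τ / Real.sin τ) ^ (n + 2) := by
  have hs : 0 < sin τ := sin_pos_of_pos_of_lt_pi hτ hτπ
  obtain rfl : g = fun t => t * (cos t / sin t) := funext hg
  dsimp only
  have hcard : Fintype.card (Fin n) = 2 * m := by rw [Fintype.card_fin, hn]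
  have hskew₂ : ((2 : ℝ) • S)ᵀ = -((2 : ℝ) • S) := by
    rw [transpose_smul, hskew, smul_neg]
  have hS2₂ : (2 : ℝ) • S * (2 : ℝ) • S = (-(2 * σ * τ) ^ 2) • 1 := by
    rw [Matrix.smul_mul, Matrix.mul_smul, hS2, smul_smul, smul_smul]; ring_nf
  have hk :
      (2 * σ * (τ * (cos τ / sin τ))) ^ 2 + (2 * σ * τ) ^ 2 = (2 * σ * τ / sin τ) ^ 2 := by
    field_simp
    exact cos_sq_add_sin_sq τ
  rw [det_fromBlocks_smul_one_sub_of_transpose_eq_neg hcard hskew₂ hS2₂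
    (hk.trans_ne (by positivity)) z, hk, (hasDerivAt_mul_cos_div_sin hs.ne').deriv,
    deriv_deriv_mul_cos_div_sin hs.ne', ← pow_mul, ← hn]
  obtain ⟨k, rfl⟩ : ∃ k, n = k + 1 := ⟨n - 1, by omega⟩
  rw [Nat.add_sub_cancel]
  simp only [div_pow, mul_pow]
  field_simp
  ring
end

section
/- Let $n\ge 1$ be an integer and let $N$ be an integer with $N>(n+1)/2$. There is a constant $C=C(n,N)$ such that for all $\Lambda>0$ and $\rho>0$: $\int_{-\infty}^{\infty} \frac{(1+\Lambda|v|)^{-\frac{n-1}{2}}\,|v|^{n-1}}{(1+\Lambda|\rho-v|)^{N}}\,dv \;\le\; C\,\Lambda^{-\frac{n+1}{2}}\rho^{\frac{n-1}{2}}$ if $\Lambda\rho\ge 1$, and $\int_{-\infty}^{\infty} \frac{(1+\Lambda|v|)^{-\frac{n-1}{2}}\,|v|^{n-1}}{(1+\Lambda|\rho-v|)^{N}}\,dv \;\le\; C\,\Lambda^{-n}$ if $\Lambda\rho\le 1$. -/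
/-!
Since `Λ|v| ≤ 1 + Λ|v|`, the factor `|v|^(n-1)` is at most `Λ^(1-n) (1 + Λ|v|)^(n-1)`, which
leaves the weight `(1 + Λ|v|)^((n-1)/2)`. Peetre's inequality
`1 + Λ|v| ≤ (1 + Λρ)(1 + Λ|ρ - v|)` moves this weight onto the second factor, so the integrand is
at most `Λ^(1-n) (1 + Λρ)^((n-1)/2) (1 + Λ|ρ - v|)^(-s)` with `s = N - (n-1)/2 > 1`. The
substitution `u = Λ(ρ - v)` turns the integral of the last factor into `Λ⁻¹ ∫ (1 + |u|)^(-s)`,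
which is finite. Finally `1 + Λρ ≤ 2Λρ` when `Λρ ≥ 1` and `1 + Λρ ≤ 2` when `Λρ ≤ 1`.
-/

open MeasureTheory Real

theorem lintegral_comp_mul_left (f : ℝ → ENNReal) {a : ℝ} (ha : a ≠ 0) :
    ∫⁻ x, f (a * x) = ENNReal.ofReal |a⁻¹| * ∫⁻ y, f y := by
  rw [← smul_eq_mul, ← lintegral_smul_measure, ← Real.map_volume_mul_left ha]
  exact (lintegral_map_equiv f (MeasurableEquiv.mulLeft₀ a ha)).symm

theorem lintegral_one_add_mul_abs_sub_rpow_neg (s : ℝ) {Λ : ℝ} (hΛ : 0 < Λ) (ρ : ℝ) :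
    ∫⁻ v, ENNReal.ofReal ((1 + Λ * |ρ - v|) ^ (-s))
      = ENNReal.ofReal Λ⁻¹ * ∫⁻ u, ENNReal.ofReal ((1 + |u|) ^ (-s)) := by
  have hscale : ∀ w, 1 + Λ * |w| = 1 + |Λ * w| := fun w => by
    rw [abs_mul, abs_of_pos hΛ]
  simp_rw [hscale]
  rw [lintegral_sub_left_eq_self (fun w => ENNReal.ofReal ((1 + |Λ * w|) ^ (-s))) ρ,
    lintegral_comp_mul_left (fun u => ENNReal.ofReal ((1 + |u|) ^ (-s))) hΛ.ne',
    abs_of_pos (inv_pos.2 hΛ)]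

theorem lintegral_one_add_abs_rpow_neg_ne_top {s : ℝ} (hs : 1 < s) :
    ∫⁻ u : ℝ, ENNReal.ofReal ((1 + |u|) ^ (-s)) ≠ ⊤ := by
  simpa using (finite_integral_one_add_norm (E := ℝ) (μ := volume) (by simpa using hs)).ne

theorem one_add_mul_abs_le_mul {Λ : ℝ} (hΛ : 0 ≤ Λ) (x y : ℝ) :
    1 + Λ * |x| ≤ (1 + Λ * |y|) * (1 + Λ * |y - x|) := by
  have htri : |x| ≤ |y| + |y - x| := by
    simpa using abs_sub y (y - x)
  nlinarith [mul_nonneg (mul_nonneg hΛ (abs_nonneg y)) (mul_nonneg hΛ (abs_nonneg (y - x)))]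

theorem rpow_neg_half_mul_abs_pow_le (k : ℕ) {Λ : ℝ} (hΛ : 0 < Λ) (v : ℝ) :
    (1 + Λ * |v|) ^ (-(k : ℝ) / 2) * |v| ^ k ≤ Λ⁻¹ ^ k * (1 + Λ * |v|) ^ ((k : ℝ) / 2) := by
  have ha : 0 < 1 + Λ * |v| := by positivity
  have hv : |v| ≤ Λ⁻¹ * (1 + Λ * |v|) := by
    rw [le_inv_mul_iff₀ hΛ]; linarith
  calc (1 + Λ * |v|) ^ (-(k : ℝ) / 2) * |v| ^ k
      ≤ (1 + Λ * |v|) ^ (-(k : ℝ) / 2) * (Λ⁻¹ * (1 + Λ * |v|)) ^ k := by gcongr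
    _ = Λ⁻¹ ^ k * ((1 + Λ * |v|) ^ (-(k : ℝ) / 2) * (1 + Λ * |v|) ^ (k : ℝ)) := by
      rw [mul_pow, rpow_natCast]; ring
    _ = Λ⁻¹ ^ k * (1 + Λ * |v|) ^ ((k : ℝ) / 2) := by
      rw [← rpow_add ha]; ring_nf

theorem convolution_integrand_le (k N : ℕ) {Λ : ℝ} (hΛ : 0 < Λ) (ρ v : ℝ) :
    (1 + Λ * |v|) ^ (-(k : ℝ) / 2) * |v| ^ k / (1 + Λ * |ρ - v|) ^ N
      ≤ (1 + Λ * |ρ|) ^ ((k : ℝ) / 2) * Λ⁻¹ ^ k * (1 + Λ * |ρ - v|) ^ ((k : ℝ) / 2 - N) := by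
  have hb : 0 < 1 + Λ * |ρ - v| := by positivity
  have hpeetre : (1 + Λ * |v|) ^ ((k : ℝ) / 2)
      ≤ (1 + Λ * |ρ|) ^ ((k : ℝ) / 2) * (1 + Λ * |ρ - v|) ^ ((k : ℝ) / 2) := by
    rw [← mul_rpow (by positivity) hb.le]
    gcongr
    exact one_add_mul_abs_le_mul hΛ.le v ρ
  calc (1 + Λ * |v|) ^ (-(k : ℝ) / 2) * |v| ^ k / (1 + Λ * |ρ - v|) ^ N
      ≤ Λ⁻¹ ^ k * ((1 + Λ * |ρ|) ^ ((k : ℝ) / 2) * (1 + Λ * |ρ - v|) ^ ((k : ℝ) / 2))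
          / (1 + Λ * |ρ - v|) ^ N := by
        gcongr ?_ / _
        exact (rpow_neg_half_mul_abs_pow_le k hΛ v).trans
          (mul_le_mul_of_nonneg_left hpeetre (by positivity))
    _ = (1 + Λ * |ρ|) ^ ((k : ℝ) / 2) * Λ⁻¹ ^ k * (1 + Λ * |ρ - v|) ^ ((k : ℝ) / 2 - N) := by
        rw [rpow_sub hb, rpow_natCast]; ring

theorem lintegral_convolution_le (k N : ℕ) {Λ : ℝ} (hΛ : 0 < Λ) (ρ : ℝ) :
    ∫⁻ v, ENNReal.ofReal ((1 + Λ * |v|) ^ (-(k : ℝ) / 2) * |v| ^ k / (1 + Λ * |ρ - v|) ^ N)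
      ≤ (∫⁻ u, ENNReal.ofReal ((1 + |u|) ^ (-(N - (k : ℝ) / 2))))
          * ENNReal.ofReal ((1 + Λ * |ρ|) ^ ((k : ℝ) / 2) * Λ⁻¹ ^ (k + 1)) := by
  set M := (1 + Λ * |ρ|) ^ ((k : ℝ) / 2) * Λ⁻¹ ^ k
  have hM : 0 ≤ M := by positivity
  calc ∫⁻ v, ENNReal.ofReal ((1 + Λ * |v|) ^ (-(k : ℝ) / 2) * |v| ^ k / (1 + Λ * |ρ - v|) ^ N)
      ≤ ∫⁻ v, ENNReal.ofReal M * ENNReal.ofReal ((1 + Λ * |ρ - v|) ^ (-(N - (k : ℝ) / 2))) :=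
        lintegral_mono fun v => by
          rw [← ENNReal.ofReal_mul hM, neg_sub]
          exact ENNReal.ofReal_le_ofReal (convolution_integrand_le k N hΛ ρ v)
    _ = ENNReal.ofReal M * (ENNReal.ofReal Λ⁻¹
          * ∫⁻ u, ENNReal.ofReal ((1 + |u|) ^ (-(N - (k : ℝ) / 2)))) := by
        rw [lintegral_const_mul' _ _ ENNReal.ofReal_ne_top,
          lintegral_one_add_mul_abs_sub_rpow_neg _ hΛ]
    _ = _ := by
        rw [← mul_assoc, ← ENNReal.ofReal_mul hM, mul_comm, pow_succ, ← mul_assoc]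

theorem one_add_rpow_le_two_rpow_mul_rpow {x q : ℝ} (hx : 1 ≤ x) (hq : 0 ≤ q) :
    (1 + x) ^ q ≤ 2 ^ q * x ^ q := by
  rw [← mul_rpow zero_le_two (by linarith)]
  gcongr
  linarith

/-- The elementary integral bound
`∫ (1+Λ|v|)^{-(n-1)/2} |v|^{n-1} (1+Λ|ρ-v|)^{-N} dv ≲ Λ^{-(n+1)/2} ρ^{(n-1)/2}` when
`Λρ ≥ 1`, and `≲ Λ^{-n}` when `Λρ ≤ 1`. -/
theorem integral_convolution_bound (n N : ℕ) (hn : 1 ≤ n)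
    (hN : ((n : ℝ) + 1) / 2 < (N : ℝ)) :
    ∃ C : ℝ, ∀ Λ ρ : ℝ, 0 < Λ → 0 < ρ →
      (1 ≤ Λ * ρ →
        (∫⁻ v : ℝ, ENNReal.ofReal
            ((1 + Λ * |v|) ^ (-((n : ℝ) - 1) / 2) * |v| ^ (n - 1) /
              (1 + Λ * |ρ - v|) ^ N))
          ≤ ENNReal.ofReal (C * Λ ^ (-((n : ℝ) + 1) / 2) * ρ ^ (((n : ℝ) - 1) / 2))) ∧
      (Λ * ρ ≤ 1 →
        (∫⁻ v : ℝ, ENNReal.ofReal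
            ((1 + Λ * |v|) ^ (-((n : ℝ) - 1) / 2) * |v| ^ (n - 1) /
              (1 + Λ * |ρ - v|) ^ N))
          ≤ ENNReal.ofReal (C * Λ ^ (-(n : ℝ)))) := by
  obtain ⟨k, rfl⟩ : ∃ k, n = k + 1 := ⟨n - 1, by omega⟩
  push_cast at hN ⊢
  simp only [add_sub_cancel_right]
  have hJ := lintegral_one_add_abs_rpow_neg_ne_top (s := N - (k : ℝ) / 2) (by linarith)
  set K := (∫⁻ u : ℝ, ENNReal.ofReal ((1 + |u|) ^ (-(N - (k : ℝ) / 2)))).toReal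
  refine ⟨K * 2 ^ ((k : ℝ) / 2), fun Λ ρ hΛ hρ => ?_⟩
  have key := lintegral_convolution_le k N hΛ ρ
  rw [abs_of_pos hρ, ← ENNReal.ofReal_toReal hJ, ← ENNReal.ofReal_mul ENNReal.toReal_nonneg,
    ← mul_assoc] at key
  have hΛpow : Λ⁻¹ ^ (k + 1) = Λ ^ (-((k : ℝ) + 1)) := by
    rw [rpow_neg hΛ.le, ← Nat.cast_add_one, rpow_natCast, inv_pow]
  refine ⟨fun h => key.trans (ENNReal.ofReal_le_ofReal ?_),
    fun h => key.trans (ENNReal.ofReal_le_ofReal ?_)⟩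
  · calc K * (1 + Λ * ρ) ^ ((k : ℝ) / 2) * Λ⁻¹ ^ (k + 1)
        ≤ K * (2 ^ ((k : ℝ) / 2) * (Λ * ρ) ^ ((k : ℝ) / 2)) * Λ⁻¹ ^ (k + 1) := by
          gcongr
          exact one_add_rpow_le_two_rpow_mul_rpow h (by positivity)
      _ = K * 2 ^ ((k : ℝ) / 2) * Λ ^ (-((k : ℝ) + 1 + 1) / 2) * ρ ^ ((k : ℝ) / 2) := by
          rw [mul_rpow hΛ.le hρ.le, hΛpow,
            show -((k : ℝ) + 1 + 1) / 2 = (k : ℝ) / 2 + -((k : ℝ) + 1) by ring, rpow_add hΛ]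
          ring
  · calc K * (1 + Λ * ρ) ^ ((k : ℝ) / 2) * Λ⁻¹ ^ (k + 1)
        ≤ K * 2 ^ ((k : ℝ) / 2) * Λ⁻¹ ^ (k + 1) := by
          gcongr
          linarith
      _ = K * 2 ^ ((k : ℝ) / 2) * Λ ^ (-((k : ℝ) + 1)) := by rw [hΛpow]
end

section
/- Let $n\ge 1$ and $N\ge 1$ be integers. There exist finitely many real coefficients $c_1,\dots,c_m$ (with $m$ bounded by a constant $C(N,n)$), multiindices $\alpha_i\in(\mathbb{N}\cup\{0\})^n$ and tuples of multiindices $(\beta_{i,1},\dots,\beta_{i,j_i})$ with $2N\le j_i\le 4N-1$ and $1\le|\beta_{i,\nu}|\le|\beta_{i,\nu+1}|$, satisfying (1) $0\le|\alpha_i|\le N$, (2) $|\beta_{i,\nu}|=1$ for $\nu=1,\dots,2N$, (3) $|\alpha_i|+\sum_{\nu=1}^{j_i}|\beta_{i,\nu}|=4N$, and (4) $\sum_{\nu=1}^{j_i}(|\beta_{i,\nu}|-1)=N-|\alpha_i|$, such that the following holds: for every open set $U\subseteq\mathbb{R}^n$, every smooth real-valued $\Phi$ on $U$ with $\nabla\Phi\ne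 0$ on $U$, and every smooth function $a$ on $U$, one has on $U$ the identity $\mathcal{L}^N a = \sum_{i=1}^m c_i\,\frac{\partial^{\alpha_i} a \;\prod_{\nu=1}^{j_i}\partial^{\beta_{i,\nu}}\Phi}{|\nabla\Phi|^{4N}}$. -/
open MeasureTheory

/-- The partial derivative `∂_{y_j} f` of a function on `ℝⁿ`. -/
noncomputable def partialDeriv (n : ℕ) (j : Fin n) (f : (Fin n → ℝ) → ℝ) :
    (Fin n → ℝ) → ℝ :=
  fun x => fderiv ℝ f x (Pi.single j 1)

/-- Iterated directional (partial) derivative along a list of coordinate directions. -/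
noncomputable def listDeriv (n : ℕ) : List (Fin n) → ((Fin n → ℝ) → ℝ) → (Fin n → ℝ) → ℝ
  | [], f => f
  | j :: L, f => partialDeriv n j (listDeriv n L f)

/-- The canonical list of directions associated to a multiindex `β`, with each
coordinate `j` repeated `β j` times. -/
def multiIndexList (n : ℕ) (β : Fin n → ℕ) : List (Fin n) :=
  (List.finRange n).flatMap fun j => List.replicate (β j) j

/-- The multiindex partial derivative `∂^β f`. -/
noncomputable def mDeriv (n : ℕ) (β : Fin n → ℕ) (f : (Fin n → ℝ) → ℝ) :
    (Fin n → ℝ) → ℝ :=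
  listDeriv n (multiIndexList n β) f

/-- The squared Euclidean length `|∇Φ(x)|²` of the gradient. -/
noncomputable def gradNormSq (n : ℕ) (Φ : (Fin n → ℝ) → ℝ) (x : Fin n → ℝ) : ℝ :=
  ∑ j, (partialDeriv n j Φ x) ^ 2

/-- The first-order operator `𝓛a = div(a ∇Φ / |∇Φ|²)`. -/
noncomputable def Lop (n : ℕ) (Φ : (Fin n → ℝ) → ℝ) (a : (Fin n → ℝ) → ℝ) :
    (Fin n → ℝ) → ℝ :=
  fun x => ∑ j, partialDeriv n j (fun y => a y * partialDeriv n j Φ y / gradNormSq n Φ y) x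

namespace IDS

open Filter Topology Set List

variable {n : ℕ} {U : Set (Fin n → ℝ)} {f g : (Fin n → ℝ) → ℝ} {x : Fin n → ℝ}

/-- the multiindex `e j`. -/
abbrev e (j : Fin n) : Fin n → ℕ := Pi.single j 1

/-- total order of a multiindex. -/
def wt (β : Fin n → ℕ) : ℕ := ∑ j, β j

lemma wt_add (β γ : Fin n → ℕ) : wt (β + γ) = wt β + wt γ := by
  simp [wt, Finset.sum_add_distrib]

lemma wt_e (j : Fin n) : wt (e j) = 1 := by simp [wt]

/-! ### congruence and smoothness of iterated partial derivatives -/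

lemma pd_congr (hU : IsOpen U) (h : Set.EqOn f g U) (j : Fin n) :
    Set.EqOn (partialDeriv n j f) (partialDeriv n j g) U := by
  intro x hx
  unfold partialDeriv
  rw [Filter.EventuallyEq.fderiv_eq (Filter.eventuallyEq_of_mem (hU.mem_nhds hx) h)]

lemma contDiffOn_pd (hU : IsOpen U) (hf : ContDiffOn ℝ (⊤ : ℕ∞) f U) (j : Fin n) :
    ContDiffOn ℝ (⊤ : ℕ∞) (partialDeriv n j f) U :=
  (hf.fderiv_of_isOpen hU (by simp)).clm_apply contDiffOn_const

lemma contDiffOn_listDeriv (hU : IsOpen U) (hf : ContDiffOn ℝ (⊤ : ℕ∞) f U) (L : List (Fin n)) :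
    ContDiffOn ℝ (⊤ : ℕ∞) (listDeriv n L f) U := by
  induction L with
  | nil => exact hf
  | cons j L ih => exact contDiffOn_pd hU ih j

lemma contDiffOn_mDeriv (hU : IsOpen U) (hf : ContDiffOn ℝ (⊤ : ℕ∞) f U) (β : Fin n → ℕ) :
    ContDiffOn ℝ (⊤ : ℕ∞) (mDeriv n β f) U :=
  contDiffOn_listDeriv hU hf _

lemma diffAt (hU : IsOpen U) (hf : ContDiffOn ℝ (⊤ : ℕ∞) f U) (hx : x ∈ U) :
    DifferentiableAt ℝ f x :=
  (hf.contDiffAt (hU.mem_nhds hx)).differentiableAt (by simp)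

/-! ### symmetry of derivatives -/

lemma pd_eq_snd (w : Fin n → ℝ) (hdiff : DifferentiableAt ℝ (fderiv ℝ f) x) (v : Fin n → ℝ) :
    fderiv ℝ (fun y => fderiv ℝ f y w) x v = fderiv ℝ (fderiv ℝ f) x v w := by
  rw [fderiv_clm_apply hdiff (differentiableAt_const _)]
  simp

lemma pd_swap (hU : IsOpen U) (hf : ContDiffOn ℝ (⊤ : ℕ∞) f U) (j l : Fin n) (hx : x ∈ U) :
    partialDeriv n j (partialDeriv n l f) x = partialDeriv n l (partialDeriv n j f) x := by
  have hca : ContDiffAt ℝ (⊤ : ℕ∞) f x := hf.contDiffAt (hU.mem_nhds hx)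
  have hsymm := hca.isSymmSndFDerivAt ((by rw [minSmoothness_of_isRCLikeNormedField]; exact WithTop.coe_le_coe.mpr (le_top : (2 : ℕ∞) ≤ ⊤)))
  have hdiff : DifferentiableAt ℝ (fderiv ℝ f) x :=
    (hca.fderiv_right (m := (⊤ : ℕ∞)) (by simp)).differentiableAt (by simp)
  unfold partialDeriv
  rw [pd_eq_snd _ hdiff, pd_eq_snd _ hdiff, hsymm.eq]

lemma listDeriv_perm (hU : IsOpen U) (hf : ContDiffOn ℝ (⊤ : ℕ∞) f U) {L L' : List (Fin n)}
    (hp : L.Perm L') : Set.EqOn (listDeriv n L f) (listDeriv n L' f) U := by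
  induction hp with
  | nil => exact fun x _ => rfl
  | cons j _ ih => exact pd_congr hU ih j
  | swap j l L =>
      intro x hx
      exact pd_swap hU (contDiffOn_listDeriv hU hf L) l j hx
  | trans _ _ ih₁ ih₂ => exact ih₁.trans ih₂

/-! ### multiindex lists -/

lemma count_multiIndexList (β : Fin n → ℕ) (i : Fin n) :
    (multiIndexList n β).count i = β i := by
  unfold multiIndexList
  rw [List.count_flatMap]
  have h : ((List.finRange n).map (List.count i ∘ fun j => List.replicate (β j) j)) =
      (List.finRange n).map (fun j => if j = i then β i else 0) := by
    apply List.map_congr_left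
    intro j _
    simp only [Function.comp_apply, List.count_replicate]
    by_cases h : j = i
    · subst h; simp
    · simp [h, Ne.symm h]
  rw [h, ← Fin.sum_univ_def]
  simp

lemma perm_cons_multiIndexList (β : Fin n → ℕ) (j : Fin n) :
    (j :: multiIndexList n β).Perm (multiIndexList n (β + e j)) := by
  rw [List.perm_iff_count]
  intro i
  rw [List.count_cons, count_multiIndexList, count_multiIndexList]
  by_cases h : i = j
  · subst h; simp
  · simp [h, Pi.single_apply, Ne.symm h]

lemma multiIndexList_single (j : Fin n) : multiIndexList n (e j) = [j] := by
  unfold multiIndexList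
  have key : ∀ l : List (Fin n),
      (l.flatMap fun i => List.replicate (e j i) i) = List.replicate (l.count j) j := by
    intro l
    induction l with
    | nil => simp
    | cons a l ih =>
        simp only [List.flatMap_cons, ih, List.count_cons]
        by_cases h : a = j
        · subst h; simp [List.replicate_succ]
        · simp [h, Pi.single_apply]
  rw [key, List.count_eq_one_of_mem (List.nodup_finRange n) (List.mem_finRange j)]
  rfl

lemma mDeriv_single (j : Fin n) (f : (Fin n → ℝ) → ℝ) :
    mDeriv n (e j) f = partialDeriv n j f := by
  rw [mDeriv, multiIndexList_single]; rfl

lemma mDeriv_zero (f : (Fin n → ℝ) → ℝ) : mDeriv n 0 f = f := by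
  rw [mDeriv]
  have : multiIndexList n (0 : Fin n → ℕ) = [] := by simp [multiIndexList]
  rw [this]; rfl

/-- bumping a multiindex: `∂_j ∂^β f = ∂^{β + e j} f` on `U`. -/
lemma pd_mDeriv (hU : IsOpen U) (hf : ContDiffOn ℝ (⊤ : ℕ∞) f U) (β : Fin n → ℕ) (j : Fin n)
    (hx : x ∈ U) :
    partialDeriv n j (mDeriv n β f) x = mDeriv n (β + e j) f x := by
  have : partialDeriv n j (mDeriv n β f) x = listDeriv n (j :: multiIndexList n β) f x := rfl
  rw [this]
  exact listDeriv_perm hU hf (perm_cons_multiIndexList β j) hx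


/-! ### pointwise derivative rules -/

lemma pd_mul (j : Fin n) (hf : DifferentiableAt ℝ f x) (hg : DifferentiableAt ℝ g x) :
    partialDeriv n j (fun y => f y * g y) x =
      partialDeriv n j f x * g x + f x * partialDeriv n j g x := by
  unfold partialDeriv
  rw [fderiv_fun_mul hf hg]
  simp only [ContinuousLinearMap.add_apply, ContinuousLinearMap.smul_apply, smul_eq_mul]
  ring

lemma pd_const_mul (j : Fin n) (c : ℝ) (hf : DifferentiableAt ℝ f x) :
    partialDeriv n j (fun y => c * f y) x = c * partialDeriv n j f x := by
  unfold partialDeriv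
  rw [fderiv_const_mul hf]
  simp

lemma pd_add (j : Fin n) (hf : DifferentiableAt ℝ f x) (hg : DifferentiableAt ℝ g x) :
    partialDeriv n j (fun y => f y + g y) x =
      partialDeriv n j f x + partialDeriv n j g x := by
  unfold partialDeriv
  rw [fderiv_fun_add hf hg]
  simp

lemma pd_div (j : Fin n) (hf : DifferentiableAt ℝ f x) (hg : DifferentiableAt ℝ g x)
    (hgx : g x ≠ 0) :
    partialDeriv n j (fun y => f y / g y) x =
      (partialDeriv n j f x * g x - f x * partialDeriv n j g x) / g x ^ 2 := by
  have hinv : partialDeriv n j (fun y => (g y)⁻¹) x =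
      -(partialDeriv n j g x) / g x ^ 2 := by
    unfold partialDeriv
    have : (fun y => (g y)⁻¹) = (fun z : ℝ => z⁻¹) ∘ g := rfl
    rw [this, ((hasFDerivAt_inv hgx).comp x hg.hasFDerivAt).fderiv]
    simp only [ContinuousLinearMap.comp_apply, ContinuousLinearMap.smulRight_apply,
      ContinuousLinearMap.one_apply, smul_eq_mul, ContinuousLinearMap.toSpanSingleton_apply]
    field_simp
  have hdg : (fun y => f y / g y) = fun y => f y * (fun z => (g z)⁻¹) y := by
    funext y; rw [div_eq_mul_inv]
  rw [hdg, pd_mul (g := fun z => (g z)⁻¹) j hf (hg.inv hgx), hinv]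
  field_simp
  ring

lemma pd_pow (j : Fin n) (p : ℕ) (hf : DifferentiableAt ℝ f x) :
    partialDeriv n j (fun y => f y ^ (p + 1)) x =
      (p + 1 : ℝ) * f x ^ p * partialDeriv n j f x := by
  induction p with
  | zero => simp [pow_one]
  | succ p ih =>
      have h1 : (fun y => f y ^ (p + 2)) = fun y => f y * f y ^ (p + 1) := by
        funext y; ring
      rw [h1, pd_mul (g := fun y => f y ^ (p + 1)) j hf (hf.pow _), ih]
      push_cast
      ring

lemma pd_finsum {ι : Type*} (j : Fin n) (s : Finset ι) (F : ι → (Fin n → ℝ) → ℝ)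
    (h : ∀ i ∈ s, DifferentiableAt ℝ (F i) x) :
    partialDeriv n j (fun y => ∑ i ∈ s, F i y) x = ∑ i ∈ s, partialDeriv n j (F i) x := by
  unfold partialDeriv
  rw [fderiv_fun_sum h]
  simp

lemma diffAt_listSum {γ : Type*} (Ts : List γ) (F : γ → (Fin n → ℝ) → ℝ)
    (h : ∀ T ∈ Ts, DifferentiableAt ℝ (F T) x) :
    DifferentiableAt ℝ (fun y => (Ts.map (fun T => F T y)).sum) x := by
  induction Ts with
  | nil => simp only [List.map_nil, List.sum_nil]; exact differentiableAt_const (0:ℝ)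
  | cons T Ts ih =>
      simp only [List.map_cons, List.sum_cons]
      exact (h T (by simp)).add (ih (fun T hT => h T (by simp [hT])))

lemma pd_listSum {γ : Type*} (j : Fin n) (Ts : List γ) (F : γ → (Fin n → ℝ) → ℝ)
    (h : ∀ T ∈ Ts, DifferentiableAt ℝ (F T) x) :
    partialDeriv n j (fun y => (Ts.map (fun T => F T y)).sum) x =
      (Ts.map (fun T => partialDeriv n j (F T) x)).sum := by
  induction Ts with
  | nil => simp [partialDeriv]
  | cons T Ts ih =>
      simp only [List.map_cons, List.sum_cons]
      rw [pd_add j (h T (by simp)) (diffAt_listSum Ts F (fun T hT => h T (by simp [hT]))),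
        ih (fun T hT => h T (by simp [hT]))]

lemma listsum_mul {γ : Type*} (l : List γ) (v : γ → ℝ) (b : ℝ) :
    (l.map v).sum * b = (l.map (fun t => v t * b)).sum := by
  induction l with
  | nil => simp
  | cons t l ih => simp [add_mul, ih]

lemma finsum_listsum {γ : Type*} (l : List γ) (w : Fin n → γ → ℝ) :
    ∑ j : Fin n, (l.map (fun t => w j t)).sum = (l.map (fun t => ∑ j : Fin n, w j t)).sum := by
  induction l with
  | nil => simp
  | cons t l ih => simp [Finset.sum_add_distrib, ih]

lemma sum_map_flatMap {γ δ : Type*} (l : List γ) (F : γ → List δ) (v : δ → ℝ) :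
    (((l.flatMap F)).map v).sum = (l.map (fun t => ((F t).map v).sum)).sum := by
  induction l with
  | nil => simp
  | cons t l ih => simp [List.flatMap_cons, ih]


/-! ### products of Φ-derivatives -/

/-- the product `∏_{β ∈ Bs} ∂^β Φ`. -/
noncomputable def Pf (Φ : (Fin n → ℝ) → ℝ) (Bs : List (Fin n → ℕ)) : (Fin n → ℝ) → ℝ :=
  fun y => (Bs.map (fun β => mDeriv n β Φ y)).prod

lemma Pf_nil (Φ : (Fin n → ℝ) → ℝ) : Pf Φ ([] : List (Fin n → ℕ)) = fun _ => 1 := rfl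

lemma Pf_cons (Φ : (Fin n → ℝ) → ℝ) (β : Fin n → ℕ) (Bs : List (Fin n → ℕ)) :
    Pf Φ (β :: Bs) = fun y => mDeriv n β Φ y * Pf Φ Bs y := rfl

lemma Pf_append (Φ : (Fin n → ℝ) → ℝ) (Bs Cs : List (Fin n → ℕ)) :
    Pf Φ (Bs ++ Cs) = fun y => Pf Φ Bs y * Pf Φ Cs y := by
  funext y; simp [Pf]

lemma cd_Pf (hU : IsOpen U) {Φ : (Fin n → ℝ) → ℝ} (hΦ : ContDiffOn ℝ (⊤ : ℕ∞) Φ U)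
    (Bs : List (Fin n → ℕ)) : ContDiffOn ℝ (⊤ : ℕ∞) (Pf Φ Bs) U := by
  induction Bs with
  | nil => exact contDiffOn_const
  | cons β Bs ih => exact (contDiffOn_mDeriv hU hΦ β).mul ih

lemma pd_Pf (hU : IsOpen U) {Φ : (Fin n → ℝ) → ℝ} (hΦ : ContDiffOn ℝ (⊤ : ℕ∞) Φ U) (j : Fin n)
    (Bs : List (Fin n → ℕ)) (hx : x ∈ U) :
    partialDeriv n j (Pf Φ Bs) x =
      ∑ i : Fin Bs.length, Pf Φ (Bs.set i (Bs.get i + e j)) x := by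
  induction Bs with
  | nil =>
      simp [Pf_nil, partialDeriv]
  | cons β Bs ih =>
      rw [Pf_cons, pd_mul j (diffAt hU (contDiffOn_mDeriv hU hΦ β) hx)
        (diffAt hU (cd_Pf hU hΦ Bs) hx), pd_mDeriv hU hΦ β j hx, ih]
      simp only [List.length_cons]
      rw [Fin.sum_univ_succ]
      simp only [ List.get_cons_succ', List.get_cons_zero, Fin.val_zero,
        List.set_cons_zero, Fin.val_succ, List.set_cons_succ, Pf_cons]
      rw [Finset.mul_sum]

/-! ### the gradient square -/

lemma g_eq (Φ : (Fin n → ℝ) → ℝ) (x : Fin n → ℝ) :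
    gradNormSq n Φ x = ∑ l, mDeriv n (e l) Φ x ^ 2 := by
  simp [gradNormSq, mDeriv_single]

lemma cd_g (hU : IsOpen U) {Φ : (Fin n → ℝ) → ℝ} (hΦ : ContDiffOn ℝ (⊤ : ℕ∞) Φ U) :
    ContDiffOn ℝ (⊤ : ℕ∞) (gradNormSq n Φ) U := by
  have : gradNormSq n Φ = fun x => ∑ j, (partialDeriv n j Φ x) ^ 2 := rfl
  rw [this]
  exact ContDiffOn.sum fun j _ => (contDiffOn_pd hU hΦ j).pow 2

lemma pd_g (hU : IsOpen U) {Φ : (Fin n → ℝ) → ℝ} (hΦ : ContDiffOn ℝ (⊤ : ℕ∞) Φ U) (j : Fin n)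
    (hx : x ∈ U) :
    partialDeriv n j (gradNormSq n Φ) x =
      2 * ∑ l, mDeriv n (e l) Φ x * mDeriv n (e l + e j) Φ x := by
  have h0 : gradNormSq n Φ = fun y => ∑ l, (partialDeriv n l Φ y) ^ 2 := rfl
  rw [h0, pd_finsum j _ (fun l y => partialDeriv n l Φ y ^ 2) (fun l _ => (diffAt hU (contDiffOn_pd hU hΦ l) hx).pow 2)]
  rw [Finset.mul_sum]
  apply Finset.sum_congr rfl
  intro l _
  have h1 : (fun y => partialDeriv n l Φ y ^ 2) = fun y => partialDeriv n l Φ y ^ (1 + 1) := by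
    norm_num
  rw [h1, pd_pow j 1 (diffAt hU (contDiffOn_pd hU hΦ l) hx)]
  have h2 : partialDeriv n l Φ = mDeriv n (e l) Φ := (mDeriv_single l Φ).symm
  rw [h2, pd_mDeriv hU hΦ (e l) j hx]
  push_cast
  ring

/-! ### list bookkeeping -/

lemma sum_map_set {γ : Type*} (F : γ → ℕ) :
    ∀ (l : List γ) (i : ℕ) (h : i < l.length) (v : γ),
      ((l.set i v).map F).sum + F l[i] = (l.map F).sum + F v := by
  intro l
  induction l with
  | nil => intro i h v; simp at h
  | cons b l ih =>
      intro i h v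
      cases i with
      | zero => simp [List.set_cons_zero]; omega
      | succ i =>
          simp only [List.set_cons_succ, List.map_cons, List.sum_cons, List.getElem_cons_succ]
          have := ih i (by simpa using h) v
          omega

lemma sum_get {γ : Type*} (l : List γ) (F : γ → ℕ) :
    ∑ i : Fin l.length, F (l.get i) = (l.map F).sum := by
  induction l with
  | nil => simp
  | cons b l ih => simp only [List.length_cons]; rw [Fin.sum_univ_succ]; simp [ih]

lemma prod_get {γ : Type*} (l : List γ) (F : γ → ℝ) :
    ∏ i : Fin l.length, F (l.get i) = (l.map F).prod := by
  induction l with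
  | nil => simp
  | cons b l ih => simp only [List.length_cons]; rw [Fin.prod_univ_succ]; simp [ih]

lemma sum_get_real {γ : Type*} (l : List γ) (F : γ → ℝ) :
    ∑ i : Fin l.length, F (l.get i) = (l.map F).sum := by
  induction l with
  | nil => simp
  | cons b l ih => simp only [List.length_cons]; rw [Fin.sum_univ_succ]; simp [ih]


/-! ### terms and their children -/

/-- A term `c · ∂^α a · ∏_{β ∈ Bs} ∂^β Φ / |∇Φ|^{2k}` is recorded as `(c, α, Bs)`. -/
abbrev Term (n : ℕ) := ℝ × (Fin n → ℕ) × List (Fin n → ℕ)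

noncomputable def tval (k : ℕ) (Φ a : (Fin n → ℝ) → ℝ) (T : Term n) : (Fin n → ℝ) → ℝ :=
  fun y => T.1 * (mDeriv n T.2.1 a y * Pf Φ T.2.2 y) / gradNormSq n Φ y ^ (2 * k)

/-- the terms produced from `T` by the `j`-th summand of `𝓛`. -/
def childrenJ (k : ℕ) (j : Fin n) (T : Term n) : List (Term n) :=
  ((List.finRange n).map fun l => (T.1, T.2.1 + e j, T.2.2 ++ [e j, e l, e l]))
  ++ (((List.finRange T.2.2.length).flatMap fun (i : Fin T.2.2.length) =>
        (List.finRange n).map fun l =>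
          (T.1, T.2.1, (T.2.2.set i (T.2.2.get i + e j)) ++ [e j, e l, e l]))
  ++ (((List.finRange n).map fun l => (T.1, T.2.1, T.2.2 ++ [e j + e j, e l, e l]))
  ++ ((List.finRange n).map fun l =>
        (-(4 * (k : ℝ) + 2) * T.1, T.2.1, T.2.2 ++ [e j, e l, e l + e j]))))

variable {Φ a : (Fin n → ℝ) → ℝ}

lemma sum_finRange_map {γ : Type*} (f : Fin n → γ) (v : γ → ℝ) :
    (((List.finRange n).map f).map v).sum = ∑ l, v (f l) := by
  rw [List.map_map, ← Fin.sum_univ_def]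
  rfl

/-- The core computation: applying the `j`-th summand of `𝓛` to a term. -/
lemma core (hU : IsOpen U) (hΦ : ContDiffOn ℝ (⊤ : ℕ∞) Φ U) (ha : ContDiffOn ℝ (⊤ : ℕ∞) a U)
    (hg0 : ∀ y ∈ U, gradNormSq n Φ y ≠ 0) (k : ℕ) (j : Fin n) (T : Term n) (hx : x ∈ U) :
    partialDeriv n j
        (fun y => tval k Φ a T y * partialDeriv n j Φ y / gradNormSq n Φ y) x =
      ((childrenJ k j T).map (fun T' => tval (k + 1) Φ a T' x)).sum := by
  obtain ⟨c, α, Bs⟩ := T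
  -- differentiability of the pieces
  have dA := diffAt hU (contDiffOn_mDeriv hU ha α) hx
  have dP := diffAt hU (cd_Pf hU hΦ Bs) hx
  have dMj := diffAt hU (contDiffOn_mDeriv hU hΦ (e j)) hx
  have dG := diffAt hU (cd_g hU hΦ) hx
  have hGx := hg0 x hx
  -- rewrite the function as a single quotient
  have hEq : Set.EqOn
      (fun y => tval k Φ a (c, α, Bs) y * partialDeriv n j Φ y / gradNormSq n Φ y)
      (fun y => (c * (mDeriv n α a y * Pf Φ Bs y * mDeriv n (e j) Φ y)) /
        gradNormSq n Φ y ^ (2 * k + 1)) U := by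
    intro y hy
    have hgy := hg0 y hy
    simp only [tval, mDeriv_single]
    field_simp
    ring
  rw [pd_congr hU hEq j hx]
  -- quotient rule
  have dNum : DifferentiableAt ℝ
      (fun y => c * (mDeriv n α a y * Pf Φ Bs y * mDeriv n (e j) Φ y)) x :=
    (((dA.mul dP).mul dMj)).const_mul c
  have dDen : DifferentiableAt ℝ (fun y => gradNormSq n Φ y ^ (2 * k + 1)) x := dG.pow _
  rw [pd_div j dNum dDen (pow_ne_zero _ hGx)]
  -- derivative of the denominator
  have hDen : partialDeriv n j (fun y => gradNormSq n Φ y ^ (2 * k + 1)) x =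
      (2 * (k : ℝ) + 1) * gradNormSq n Φ x ^ (2 * k) *
        (2 * ∑ l, mDeriv n (e l) Φ x * mDeriv n (e l + e j) Φ x) := by
    rw [pd_pow j (2 * k) dG, pd_g hU hΦ j hx]
    push_cast
    ring
  -- derivative of the numerator
  have hNum : partialDeriv n j
      (fun y => c * (mDeriv n α a y * Pf Φ Bs y * mDeriv n (e j) Φ y)) x =
      c * ((mDeriv n (α + e j) a x * Pf Φ Bs x +
            mDeriv n α a x * ∑ i : Fin Bs.length, Pf Φ (Bs.set i (Bs.get i + e j)) x) *
              mDeriv n (e j) Φ x +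
            mDeriv n α a x * Pf Φ Bs x * mDeriv n (e j + e j) Φ x) := by
    rw [pd_const_mul (f := fun y => mDeriv n α a y * Pf Φ Bs y * mDeriv n (e j) Φ y) j c
        ((dA.mul dP).mul dMj),
      pd_mul (f := fun y => mDeriv n α a y * Pf Φ Bs y) j (dA.mul dP) dMj,
      pd_mul j dA dP, pd_mDeriv hU ha α j hx, pd_Pf hU hΦ j Bs hx,
      pd_mDeriv hU hΦ (e j) j hx]
  rw [hDen, hNum]
  -- now compute the sum over the children
  simp only [childrenJ, List.map_append, List.sum_append]
  have hG1 : ((((List.finRange n).map fun l => ((c, α + e j, Bs ++ [e j, e l, e l]) : Term n)).map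
      (fun T' => tval (k+1) Φ a T' x)).sum) =
      c * (mDeriv n (α + e j) a x * (Pf Φ Bs x * mDeriv n (e j) Φ x)) * gradNormSq n Φ x /
        gradNormSq n Φ x ^ (2 * (k+1)) := by
    rw [sum_finRange_map]
    have : ∀ l : Fin n, tval (k+1) Φ a ((c, α + e j, Bs ++ [e j, e l, e l]) : Term n) x =
        (c * (mDeriv n (α + e j) a x * (Pf Φ Bs x * mDeriv n (e j) Φ x)) /
          gradNormSq n Φ x ^ (2 * (k+1))) * (mDeriv n (e l) Φ x ^ 2) := by
      intro l
      simp only [tval, Pf_append, Pf_cons, Pf_nil]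
      ring
    rw [Finset.sum_congr rfl (fun l _ => this l), ← Finset.mul_sum, ← g_eq]
    ring
  have hG2 : (((((List.finRange Bs.length).flatMap fun (i : Fin Bs.length) => (List.finRange n).map fun l =>
        ((c, α, (Bs.set i (Bs.get i + e j)) ++ [e j, e l, e l]) : Term n))).map
      (fun T' => tval (k+1) Φ a T' x)).sum) =
      c * (mDeriv n α a x *
          ((∑ i : Fin Bs.length, Pf Φ (Bs.set i (Bs.get i + e j)) x) * mDeriv n (e j) Φ x)) *
        gradNormSq n Φ x / gradNormSq n Φ x ^ (2 * (k+1)) := by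
    rw [sum_map_flatMap]
    have hinner : ∀ i : Fin Bs.length,
        ((((List.finRange n).map fun l =>
            ((c, α, (Bs.set i (Bs.get i + e j)) ++ [e j, e l, e l]) : Term n)).map
          (fun T' => tval (k+1) Φ a T' x)).sum) =
        (c * (mDeriv n α a x * (Pf Φ (Bs.set i (Bs.get i + e j)) x * mDeriv n (e j) Φ x)) /
          gradNormSq n Φ x ^ (2 * (k+1))) * gradNormSq n Φ x := by
      intro i
      rw [sum_finRange_map]
      have : ∀ l : Fin n, tval (k+1) Φ a
          ((c, α, (Bs.set i (Bs.get i + e j)) ++ [e j, e l, e l]) : Term n) x =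
          (c * (mDeriv n α a x * (Pf Φ (Bs.set i (Bs.get i + e j)) x * mDeriv n (e j) Φ x)) /
            gradNormSq n Φ x ^ (2 * (k+1))) * (mDeriv n (e l) Φ x ^ 2) := by
        intro l
        simp only [tval, Pf_append, Pf_cons, Pf_nil]
        ring
      rw [Finset.sum_congr rfl (fun l _ => this l), ← Finset.mul_sum, ← g_eq]
    have hconv : (((List.finRange Bs.length).map (fun (i : Fin Bs.length) =>
        ((((List.finRange n).map fun l =>
            ((c, α, (Bs.set i (Bs.get i + e j)) ++ [e j, e l, e l]) : Term n)).map
          (fun T' => tval (k+1) Φ a T' x)).sum))).sum) =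
        ∑ i : Fin Bs.length,
          (c * (mDeriv n α a x * (Pf Φ (Bs.set i (Bs.get i + e j)) x * mDeriv n (e j) Φ x)) /
            gradNormSq n Φ x ^ (2 * (k+1))) * gradNormSq n Φ x := by
      rw [← Fin.sum_univ_def]
      exact Finset.sum_congr rfl (fun i _ => hinner i)
    rw [hconv, ← Finset.sum_mul]
    rw [show (∑ i : Fin Bs.length,
        c * (mDeriv n α a x * (Pf Φ (Bs.set i (Bs.get i + e j)) x * mDeriv n (e j) Φ x)) /
          gradNormSq n Φ x ^ (2 * (k+1))) =
        (∑ i : Fin Bs.length, Pf Φ (Bs.set i (Bs.get i + e j)) x) *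
          (c * (mDeriv n α a x * mDeriv n (e j) Φ x) / gradNormSq n Φ x ^ (2 * (k+1)))
      from by rw [Finset.sum_mul]; exact Finset.sum_congr rfl (fun i _ => by ring)]
    ring
  have hG3 : ((((List.finRange n).map fun l =>
        ((c, α, Bs ++ [e j + e j, e l, e l]) : Term n)).map
      (fun T' => tval (k+1) Φ a T' x)).sum) =
      c * (mDeriv n α a x * (Pf Φ Bs x * mDeriv n (e j + e j) Φ x)) * gradNormSq n Φ x /
        gradNormSq n Φ x ^ (2 * (k+1)) := by
    rw [sum_finRange_map]
    have : ∀ l : Fin n, tval (k+1) Φ a ((c, α, Bs ++ [e j + e j, e l, e l]) : Term n) x =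
        (c * (mDeriv n α a x * (Pf Φ Bs x * mDeriv n (e j + e j) Φ x)) /
          gradNormSq n Φ x ^ (2 * (k+1))) * (mDeriv n (e l) Φ x ^ 2) := by
      intro l
      simp only [tval, Pf_append, Pf_cons, Pf_nil]
      ring
    rw [Finset.sum_congr rfl (fun l _ => this l), ← Finset.mul_sum, ← g_eq]
    ring
  have hG4 : ((((List.finRange n).map fun l =>
        ((-(4 * (k : ℝ) + 2) * c, α, Bs ++ [e j, e l, e l + e j]) : Term n)).map
      (fun T' => tval (k+1) Φ a T' x)).sum) =
      -(4 * (k : ℝ) + 2) * c * (mDeriv n α a x * (Pf Φ Bs x * mDeriv n (e j) Φ x)) *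
        (∑ l, mDeriv n (e l) Φ x * mDeriv n (e l + e j) Φ x) /
        gradNormSq n Φ x ^ (2 * (k+1)) := by
    rw [sum_finRange_map]
    have : ∀ l : Fin n, tval (k+1) Φ a
        ((-(4 * (k : ℝ) + 2) * c, α, Bs ++ [e j, e l, e l + e j]) : Term n) x =
        (-(4 * (k : ℝ) + 2) * c * (mDeriv n α a x * (Pf Φ Bs x * mDeriv n (e j) Φ x)) /
          gradNormSq n Φ x ^ (2 * (k+1))) *
          (mDeriv n (e l) Φ x * mDeriv n (e l + e j) Φ x) := by
      intro l
      simp only [tval, Pf_append, Pf_cons, Pf_nil]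
      ring
    rw [Finset.sum_congr rfl (fun l _ => this l), ← Finset.mul_sum]
    ring
  rw [hG1, hG2, hG3, hG4]
  set S := ∑ i : Fin Bs.length, Pf Φ (Bs.set i (Bs.get i + e j)) x with hSdef
  set W := ∑ l, mDeriv n (e l) Φ x * mDeriv n (e l + e j) Φ x with hWdef
  set A1 := mDeriv n α a x with hA1
  set A2 := mDeriv n (α + e j) a x with hA2
  set P := Pf Φ Bs x with hP
  set Mj := mDeriv n (e j) Φ x with hMj
  set M2 := mDeriv n (e j + e j) Φ x with hM2
  set G := gradNormSq n Φ x with hG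
  field_simp
  ring

/-! ### the induction -/

def step (k : ℕ) (T : Term n) : List (Term n) :=
  (List.finRange n).flatMap fun j => childrenJ k j T

noncomputable def vsum (k : ℕ) (Φ a : (Fin n → ℝ) → ℝ) (Ts : List (Term n)) :
    (Fin n → ℝ) → ℝ :=
  fun y => (Ts.map (fun T => tval k Φ a T y)).sum

lemma cd_tval (hU : IsOpen U) (hΦ : ContDiffOn ℝ (⊤ : ℕ∞) Φ U) (ha : ContDiffOn ℝ (⊤ : ℕ∞) a U)
    (hg0 : ∀ y ∈ U, gradNormSq n Φ y ≠ 0) (k : ℕ) (T : Term n) :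
    ContDiffOn ℝ (⊤ : ℕ∞) (tval k Φ a T) U := by
  apply ContDiffOn.div
  · exact contDiffOn_const.mul ((contDiffOn_mDeriv hU ha T.2.1).mul (cd_Pf hU hΦ T.2.2))
  · exact (cd_g hU hΦ).pow _
  · exact fun y hy => pow_ne_zero _ (hg0 y hy)

lemma Lop_vsum (hU : IsOpen U) (hΦ : ContDiffOn ℝ (⊤ : ℕ∞) Φ U) (ha : ContDiffOn ℝ (⊤ : ℕ∞) a U)
    (hg0 : ∀ y ∈ U, gradNormSq n Φ y ≠ 0) (k : ℕ) (Ts : List (Term n))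
    {F : (Fin n → ℝ) → ℝ} (hF : Set.EqOn F (vsum k Φ a Ts) U) (hx : x ∈ U) :
    Lop n Φ F x = vsum (k + 1) Φ a (Ts.flatMap (step k)) x := by
  have hstep : ∀ j : Fin n,
      partialDeriv n j (fun y => F y * partialDeriv n j Φ y / gradNormSq n Φ y) x
      = (Ts.map (fun T => partialDeriv n j
          (fun y => tval k Φ a T y * partialDeriv n j Φ y / gradNormSq n Φ y) x)).sum := by
    intro j
    have h1 : Set.EqOn (fun y => F y * partialDeriv n j Φ y / gradNormSq n Φ y)
        (fun y => (Ts.map (fun T =>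
          tval k Φ a T y * partialDeriv n j Φ y / gradNormSq n Φ y)).sum) U := by
      intro y hy
      simp only
      rw [hF hy]
      unfold vsum
      simp only [div_eq_mul_inv]
      rw [listsum_mul, listsum_mul]
    rw [pd_congr hU h1 j hx]
    refine pd_listSum j Ts _ (fun T _ => ?_)
    have hrw : (fun y => tval k Φ a T y * partialDeriv n j Φ y / gradNormSq n Φ y) =
        fun y => tval k Φ a T y * partialDeriv n j Φ y * (gradNormSq n Φ y)⁻¹ := by
      funext y; rw [div_eq_mul_inv]
    rw [hrw]
    exact ((diffAt hU (cd_tval hU hΦ ha hg0 k T) hx).mul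
        (diffAt hU (contDiffOn_pd hU hΦ j) hx)).mul
        ((diffAt hU (cd_g hU hΦ) hx).inv (hg0 x hx))
  show (∑ j, partialDeriv n j (fun y => F y * partialDeriv n j Φ y / gradNormSq n Φ y) x) = _
  rw [Finset.sum_congr rfl (fun j _ => hstep j), finsum_listsum]
  unfold vsum
  rw [sum_map_flatMap]
  congr 1
  apply List.map_congr_left
  intro T _
  rw [Finset.sum_congr rfl (fun j _ => core hU hΦ ha hg0 k j T hx)]
  unfold step
  rw [sum_map_flatMap, ← Fin.sum_univ_def]

/-- the bookkeeping invariant for terms at stage `k`. -/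
def Inv (k : ℕ) (T : Term n) : Prop :=
  T.2.2.length = 3 * k ∧ wt T.2.1 ≤ k ∧ wt T.2.1 + (T.2.2.map wt).sum = 4 * k ∧
    ∀ β ∈ T.2.2, 1 ≤ wt β

lemma inv_step {k : ℕ} {T : Term n} (hT : Inv k T) :
    ∀ T' ∈ step k T, Inv (k + 1) T' := by
  obtain ⟨c, α, Bs⟩ := T
  obtain ⟨hlen, hα, hsum, hmem⟩ := hT
  simp only at hlen hα hsum hmem
  intro T' hT'
  simp only [step, childrenJ, List.mem_flatMap, List.mem_append, List.mem_map] at hT'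
  obtain ⟨j, -, hc⟩ := hT'
  have hwt3 : ∀ (β γ δ : Fin n → ℕ), (([β, γ, δ] : List _).map wt).sum = wt β + wt γ + wt δ := by
    intro β γ δ; simp [add_assoc]
  rcases hc with (⟨l, -, rfl⟩ | ⟨i, -, l, -, rfl⟩ | ⟨l, -, rfl⟩ | ⟨l, -, rfl⟩) <;>
    dsimp only [Inv]
  · refine ⟨by simp [hlen]; omega, ?_, ?_, ?_⟩
    · simp only [wt_add, wt_e]; omega
    · simp only [List.map_append, List.sum_append, wt_add, wt_e, hwt3]
      omega
    · intro β hβ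
      rcases List.mem_append.1 hβ with h | h
      · exact hmem β h
      · simp only [List.mem_cons, List.not_mem_nil, or_false] at h
        rcases h with rfl | rfl | rfl <;> simp [wt_e]
  · have hset := sum_map_set wt Bs i.1 i.2 (Bs.get i + e j)
    have hget : Bs[i.1] = Bs.get i := rfl
    refine ⟨by simp [List.length_set, hlen]; omega, by omega, ?_, ?_⟩
    · simp only [List.map_append, List.sum_append, hwt3, wt_e]
      rw [hget] at hset
      have : wt (Bs.get i + e j) = wt (Bs.get i) + 1 := by rw [wt_add, wt_e]
      omega
    · intro β hβ
      rcases List.mem_append.1 hβ with h | h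
      · rcases List.mem_or_eq_of_mem_set h with h' | rfl
        · exact hmem β h'
        · rw [wt_add, wt_e]; omega
      · simp only [List.mem_cons, List.not_mem_nil, or_false] at h
        rcases h with rfl | rfl | rfl <;> simp [wt_e]
  · refine ⟨by simp [hlen]; omega, by omega, ?_, ?_⟩
    · simp only [List.map_append, List.sum_append, hwt3, wt_add, wt_e]
      omega
    · intro β hβ
      rcases List.mem_append.1 hβ with h | h
      · exact hmem β h
      · simp only [List.mem_cons, List.not_mem_nil, or_false] at h
        rcases h with rfl | rfl | rfl <;> simp [wt_add, wt_e]
  · refine ⟨by simp [hlen]; omega, by omega, ?_, ?_⟩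
    · simp only [List.map_append, List.sum_append, hwt3, wt_add, wt_e]
      omega
    · intro β hβ
      rcases List.mem_append.1 hβ with h | h
      · exact hmem β h
      · simp only [List.mem_cons, List.not_mem_nil, or_false] at h
        rcases h with rfl | rfl | rfl <;> simp [wt_add, wt_e]

/-- the main representation lemma. -/
lemma rep (n k : ℕ) : ∃ Ts : List (Term n), (∀ T ∈ Ts, Inv k T) ∧
    ∀ U : Set (Fin n → ℝ), IsOpen U → ∀ Φ a : (Fin n → ℝ) → ℝ,
      ContDiffOn ℝ (⊤ : ℕ∞) Φ U → ContDiffOn ℝ (⊤ : ℕ∞) a U → (∀ y ∈ U, gradNormSq n Φ y ≠ 0) →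
      ∀ x ∈ U, (Lop n Φ)^[k] a x = vsum k Φ a Ts x := by
  induction k with
  | zero =>
      refine ⟨[((1:ℝ), (0 : Fin n → ℕ), ([] : List (Fin n → ℕ)))], ?_, ?_⟩
      · intro T hT
        simp only [List.mem_singleton] at hT
        subst hT
        refine ⟨rfl, by simp [wt], by simp [wt], by simp⟩
      · intro U hU Φ a hΦ ha hg0 x hx
        simp [vsum, tval, mDeriv_zero, Pf_nil]
  | succ k ih =>
      obtain ⟨Ts, hinv, hid⟩ := ih
      refine ⟨Ts.flatMap (step k), ?_, ?_⟩
      · intro T' hT'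
        rw [List.mem_flatMap] at hT'
        obtain ⟨T, hT, hT'⟩ := hT'
        exact inv_step (hinv T hT) T' hT'
      · intro U hU Φ a hΦ ha hg0 x hx
        rw [Function.iterate_succ_apply']
        exact Lop_vsum hU hΦ ha hg0 k Ts
          (fun y hy => hid U hU Φ a hΦ ha hg0 y hy) hx

end IDS

/-- Structure of the iterates `𝓛^N a` of the integration-by-parts
operator `𝓛a = div(a∇Φ/|∇Φ|²)`: `𝓛^N a` is a universal linear combination of terms
`∂^α a ∏_ν ∂^{β_ν} Φ / |∇Φ|^{4N}` with multiindices satisfying conditions (1)–(4). -/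
theorem iterated_divergence_structure (n N : ℕ) (hn : 1 ≤ n) (hN : 1 ≤ N) :
    ∃ (m : ℕ) (c : Fin m → ℝ) (α : Fin m → (Fin n → ℕ)) (J : Fin m → ℕ)
      (B : (i : Fin m) → Fin (J i) → (Fin n → ℕ)),
      (∀ i, 2 * N ≤ J i ∧ J i ≤ 4 * N - 1) ∧
      -- each |β_ν| ≥ 1, and the orders are nondecreasing in ν :
      (∀ i (ν : Fin (J i)), 1 ≤ ∑ j, B i ν j) ∧
      (∀ i (ν ν' : Fin (J i)), ν ≤ ν' → (∑ j, B i ν j) ≤ ∑ j, B i ν' j) ∧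
      -- (1) 0 ≤ |α| ≤ N :
      (∀ i, (∑ j, α i j) ≤ N) ∧
      -- (2) |β_ν| = 1 for ν = 1, …, 2N :
      (∀ i (ν : Fin (J i)), (ν : ℕ) < 2 * N → (∑ j, B i ν j) = 1) ∧
      -- (3) |α| + ∑_ν |β_ν| = 4N :
      (∀ i, (∑ j, α i j) + (∑ ν, ∑ j, B i ν j) = 4 * N) ∧
      -- (4) ∑_ν (|β_ν| - 1) = N - |α| :
      (∀ i, (∑ ν, ((∑ j, B i ν j) - 1)) = N - (∑ j, α i j)) ∧
      -- the identity 𝓛^N a = ∑ᵢ cᵢ ∂^{αᵢ}a ∏_ν ∂^{β_{i,ν}}Φ / |∇Φ|^{4N} on U :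
      (∀ U : Set (Fin n → ℝ), IsOpen U →
        ∀ Φ a : (Fin n → ℝ) → ℝ, ContDiffOn ℝ (⊤ : ℕ∞) Φ U → ContDiffOn ℝ (⊤ : ℕ∞) a U →
          (∀ x ∈ U, gradNormSq n Φ x ≠ 0) →
          ∀ x ∈ U,
            (Lop n Φ)^[N] a x
              = ∑ i, c i *
                  (mDeriv n (α i) a x * ∏ ν, mDeriv n (B i ν) Φ x) /
                    (gradNormSq n Φ x) ^ (2 * N)) := by
  classical
  obtain ⟨Ts, hinv, hid⟩ := IDS.rep n N
  set le : (Fin n → ℕ) → (Fin n → ℕ) → Bool := fun β γ => decide (IDS.wt β ≤ IDS.wt γ)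
    with hle
  have hI : ∀ i : Fin Ts.length, IDS.Inv N (Ts.get i) := fun i => hinv _ (List.get_mem Ts i)
  have hperm : ∀ i : Fin Ts.length, ((Ts.get i).2.2.mergeSort le).Perm (Ts.get i).2.2 :=
    fun i => List.mergeSort_perm _ le
  have hJlen : ∀ i : Fin Ts.length, ((Ts.get i).2.2.mergeSort le).length = 3 * N :=
    fun i => (hperm i).length_eq.trans (hI i).1
  have hwtB : ∀ (i : Fin Ts.length) (ν : Fin ((Ts.get i).2.2.mergeSort le).length),
      1 ≤ IDS.wt (((Ts.get i).2.2.mergeSort le).get ν) := by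
    intro i ν
    exact (hI i).2.2.2 _ ((hperm i).subset (List.get_mem _ ν))
  have hsorted : ∀ i : Fin Ts.length,
      List.Pairwise (fun β γ => IDS.wt β ≤ IDS.wt γ) ((Ts.get i).2.2.mergeSort le) := by
    intro i
    have h := List.pairwise_mergeSort (le := le)
      (by intro a b c h1 h2; simp only [hle, decide_eq_true_eq] at *; omega)
      (by intro a b; simp only [hle, Bool.or_eq_true, decide_eq_true_eq]; omega)
      (Ts.get i).2.2
    exact h.imp (fun hab => by simpa [hle] using hab)
  have hmono : ∀ (i : Fin Ts.length) (ν ν' : Fin ((Ts.get i).2.2.mergeSort le).length),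
      ν ≤ ν' → IDS.wt (((Ts.get i).2.2.mergeSort le).get ν) ≤
        IDS.wt (((Ts.get i).2.2.mergeSort le).get ν') := by
    intro i ν ν' hνν'
    rcases Fin.eq_or_lt_of_le hνν' with h | h
    · subst h; exact le_rfl
    · exact (hsorted i).rel_get_of_lt h
  have hsum : ∀ i : Fin Ts.length,
      (∑ ν, IDS.wt (((Ts.get i).2.2.mergeSort le).get ν)) = ((Ts.get i).2.2.map IDS.wt).sum :=
    fun i => (IDS.sum_get _ IDS.wt).trans ((hperm i).map IDS.wt).sum_eq
  have cond3 : ∀ i : Fin Ts.length,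
      IDS.wt (Ts.get i).2.1 + (∑ ν, IDS.wt (((Ts.get i).2.2.mergeSort le).get ν)) = 4 * N := by
    intro i
    rw [hsum i]
    exact (hI i).2.2.1
  have cond4 : ∀ i : Fin Ts.length,
      (∑ ν, (IDS.wt (((Ts.get i).2.2.mergeSort le).get ν) - 1)) =
        N - IDS.wt (Ts.get i).2.1 := by
    intro i
    have h1 : (∑ ν, (IDS.wt (((Ts.get i).2.2.mergeSort le).get ν) - 1 + 1)) =
        ∑ ν, IDS.wt (((Ts.get i).2.2.mergeSort le).get ν) :=
      Finset.sum_congr rfl (fun ν _ => by have := hwtB i ν; omega)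
    rw [Finset.sum_add_distrib] at h1
    simp only [Finset.sum_const, Finset.card_univ, Fintype.card_fin, smul_eq_mul, mul_one] at h1
    have h3 := cond3 i
    have h4 := (hI i).2.1
    have h5 := hJlen i
    omega
  refine ⟨Ts.length, fun i => (Ts.get i).1, fun i => (Ts.get i).2.1,
    fun i => ((Ts.get i).2.2.mergeSort le).length,
    fun i ν => ((Ts.get i).2.2.mergeSort le).get ν, ?_, ?_, ?_, ?_, ?_, ?_, ?_, ?_⟩
  · intro i
    dsimp only
    have := hJlen i
    omega
  · exact hwtB
  · exact hmono
  · exact fun i => (hI i).2.1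
  · -- condition (2)
    intro i ν hν
    dsimp only at ν hν ⊢
    by_contra hne
    have h2 : 2 ≤ IDS.wt (((Ts.get i).2.2.mergeSort le).get ν) := by
      have h1 := hwtB i ν
      have hne' : IDS.wt (((Ts.get i).2.2.mergeSort le).get ν) ≠ 1 := hne
      omega
    -- all later indices have weight ≥ 2
    have hge : ∀ ν' : Fin ((Ts.get i).2.2.mergeSort le).length, ν ≤ ν' →
        2 ≤ IDS.wt (((Ts.get i).2.2.mergeSort le).get ν') :=
      fun ν' h => le_trans h2 (hmono i ν ν' h)
    have hlb : (Finset.univ.filter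
          (fun ν' : Fin ((Ts.get i).2.2.mergeSort le).length => ν ≤ ν')).card ≤
        ∑ ν', (IDS.wt (((Ts.get i).2.2.mergeSort le).get ν') - 1) := by
      rw [Finset.card_filter]
      apply Finset.sum_le_sum
      intro ν' _
      by_cases h : ν ≤ ν'
      · simp only [h, if_true]
        have := hge ν' h
        omega
      · simp [h]
    have hcard : ((Ts.get i).2.2.mergeSort le).length - (ν : ℕ) ≤
        (Finset.univ.filter
          (fun ν' : Fin ((Ts.get i).2.2.mergeSort le).length => ν ≤ ν')).card := by
      have hcompl : (Finset.univ.filter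
          (fun ν' : Fin ((Ts.get i).2.2.mergeSort le).length => ¬ ν ≤ ν')).card ≤ (ν : ℕ) := by
        have hc := Finset.card_le_card_of_injOn
          (s := Finset.univ.filter
            (fun ν' : Fin ((Ts.get i).2.2.mergeSort le).length => ¬ ν ≤ ν'))
          (t := Finset.range (ν : ℕ))
          (fun ν' => (ν' : ℕ))
          (fun ν' hν' => Finset.mem_range.mpr (by
            simp only [Finset.mem_filter, not_le] at hν'
            simpa using hν'))
          (fun a _ b _ hab => Fin.val_injective hab)
        simpa using hc
      have htot := Finset.card_filter_add_card_filter_not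
        (s := (Finset.univ : Finset (Fin ((Ts.get i).2.2.mergeSort le).length)))
        (p := fun ν' => ν ≤ ν')
      simp only [Finset.card_univ, Fintype.card_fin] at htot
      omega
    have h4 := cond4 i
    have h5 := hJlen i
    have hub : N - IDS.wt (Ts.get i).2.1 ≤ N := Nat.sub_le _ _
    have hνlt : (ν : ℕ) < 2 * N := hν
    omega
  · -- condition (3)
    exact cond3
  · -- condition (4)
    exact cond4
  · -- the identity
    intro U hU Φ a hΦ ha hg0 x hx
    rw [hid U hU Φ a hΦ ha hg0 x hx]
    have : IDS.vsum N Φ a Ts x = ∑ i : Fin Ts.length, IDS.tval N Φ a (Ts.get i) x :=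
      (IDS.sum_get_real Ts (fun T => IDS.tval N Φ a T x)).symm
    rw [this]
    apply Finset.sum_congr rfl
    intro i _
    have hprod : (∏ ν, mDeriv n (((Ts.get i).2.2.mergeSort le).get ν) Φ x) =
        IDS.Pf Φ (Ts.get i).2.2 x := by
      rw [IDS.prod_get _ (fun β => mDeriv n β Φ x)]
      exact ((hperm i).map (fun β => mDeriv n β Φ x)).prod_eq
    rw [hprod]
    rfl
end
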